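/- arXiv:2412.19912 — 5 statements merged into one kernel-verified Lean document; each statement's English description precedes it below -/
import Mathlib

section
/- Let G be an n-vertex graph with δ(G) ≥ (1/2 + ε)n, and let {U, V, W} be a partition of V(G) with |U| = |V| = m = c₁ log n. Then for suitable c₂ with ε, c₁ ≫ c₂ ≫ 1/n and m' = c₂ log n, there exist m'-sets U' ⊆ U, V' ⊆ V, W' ⊆ W such that G contains the complete bipartite graphs K(U', W') and K(V', W'), i.e. every vertex of U' ∪ V' is adjacent to every vertex of W'. -/
open Finset

private lemma choose_ratio : ∀ (a k m : ℕ), a ≤ k → k ≤ m →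
    m.choose a * (k - a) ^ a ≤ k.choose a * m ^ a := by
  intro a
  induction a with
  | zero => intro k m _ _; simp
  | succ a ih =>
    intro k m hak hkm
    have ha : a ≤ k := Nat.le_of_succ_le hak
    have h1 : m.choose (a+1) * (k - (a+1)) ^ (a+1) * (a+1)
        = m.choose a * (m - a) * (k - (a+1)) ^ (a+1) := by
      rw [mul_right_comm, Nat.choose_succ_right_eq]
    have h2 : k.choose (a+1) * m ^ (a+1) * (a+1)
        = k.choose a * (k - a) * m ^ (a+1) := by
      rw [mul_right_comm, Nat.choose_succ_right_eq]
    have key : m.choose (a+1) * (k - (a+1)) ^ (a+1) * (a+1)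
        ≤ k.choose (a+1) * m ^ (a+1) * (a+1) := by
      rw [h1, h2]
      calc m.choose a * (m - a) * (k - (a+1)) ^ (a+1)
          = m.choose a * (k - (a+1)) ^ a * ((m - a) * (k - (a+1))) := by rw [pow_succ]; ring
        _ ≤ m.choose a * (k - a) ^ a * ((m - a) * (k - (a+1))) := by
            have : (k - (a+1)) ^ a ≤ (k - a) ^ a := Nat.pow_le_pow_left (by omega) a
            exact Nat.mul_le_mul (Nat.mul_le_mul_left _ this) le_rfl
        _ ≤ k.choose a * m ^ a * (m * (k - a)) :=
            Nat.mul_le_mul (ih k m ha hkm) (Nat.mul_le_mul (Nat.sub_le m a) (by omega))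
        _ = k.choose a * (k - a) * m ^ (a+1) := by ring
    exact Nat.le_of_mul_le_mul_right key (Nat.succ_pos a)

private lemma sum_adj_comm {α : Type} [DecidableEq α] (G : SimpleGraph α) [DecidableRel G.Adj]
    (s t : Finset α) :
    ∑ w ∈ t, (s.filter (G.Adj w)).card = ∑ u ∈ s, (t.filter (G.Adj u)).card := by
  simp_rw [Finset.card_filter]
  rw [Finset.sum_comm]
  simp_rw [G.adj_comm]

private lemma powersetCard_filter {α : Type} [DecidableEq α] (G : SimpleGraph α)
    [DecidableRel G.Adj] (a : ℕ) (U : Finset α) (w : α) :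
    (U.filter (G.Adj w)).powersetCard a
      = (U.powersetCard a).filter (fun S => ∀ u ∈ S, G.Adj w u) := by
  ext S
  simp only [Finset.mem_powersetCard, Finset.mem_filter, Finset.subset_iff]
  constructor
  · rintro ⟨hsub, hcard⟩
    exact ⟨⟨fun x hx => (hsub hx).1, hcard⟩, fun u hu => (hsub hu).2⟩
  · rintro ⟨⟨hsub, hcard⟩, hadj⟩
    exact ⟨fun x hx => ⟨hsub hx, hadj x hx⟩, hcard⟩

private lemma count_identity {α : Type} [DecidableEq α] (G : SimpleGraph α) [DecidableRel G.Adj]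
    (a : ℕ) (U V B : Finset α) :
    ∑ w ∈ B, ((U.filter (G.Adj w)).card.choose a) * ((V.filter (G.Adj w)).card.choose a)
    = ∑ S ∈ U.powersetCard a, ∑ T ∈ V.powersetCard a,
        (B.filter (fun w => (∀ u ∈ S, G.Adj w u) ∧ (∀ v ∈ T, G.Adj w v))).card := by
  have hS : ∀ (X : Finset α) (w : α), (X.filter (G.Adj w)).card.choose a
      = ∑ S ∈ X.powersetCard a, if ∀ u ∈ S, G.Adj w u then 1 else 0 := by
    intro X w
    rw [← Finset.card_powersetCard, powersetCard_filter, Finset.card_filter]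
  calc ∑ w ∈ B, ((U.filter (G.Adj w)).card.choose a) * ((V.filter (G.Adj w)).card.choose a)
      = ∑ w ∈ B, ∑ S ∈ U.powersetCard a, ∑ T ∈ V.powersetCard a,
          (if (∀ u ∈ S, G.Adj w u) ∧ (∀ v ∈ T, G.Adj w v) then 1 else 0) := by
        refine Finset.sum_congr rfl fun w _ => ?_
        rw [hS U w, hS V w, Finset.sum_mul_sum]
        refine Finset.sum_congr rfl fun S _ => Finset.sum_congr rfl fun T _ => ?_
        rw [ite_zero_mul_ite_zero]
        simp
    _ = ∑ S ∈ U.powersetCard a, ∑ T ∈ V.powersetCard a,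
        (B.filter (fun w => (∀ u ∈ S, G.Adj w u) ∧ (∀ v ∈ T, G.Adj w v))).card := by
        rw [Finset.sum_comm]
        refine Finset.sum_congr rfl fun S _ => ?_
        rw [Finset.sum_comm]
        refine Finset.sum_congr rfl fun T _ => ?_
        rw [Finset.card_filter]

set_option maxHeartbeats 2000000 in
private lemma key_lemma (ε c₁ : ℝ) (hε : 0 < ε) (hε4 : ε ≤ 1/4) (hc₁ : 0 < c₁) :
    ∃ c₂ : ℝ, 0 < c₂ ∧ ∃ n₀ : ℕ, ∀ n : ℕ, n₀ ≤ n →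
    ∀ (α : Type) [Fintype α] [DecidableEq α] (G : SimpleGraph α), Fintype.card α = n →
    (∀ v : α, ((1:ℝ)/2 + ε) * n ≤ Nat.card {w : α | G.Adj v w}) →
    ∀ U V W : Finset α, Disjoint U V → Disjoint U W → Disjoint V W →
      U ∪ V ∪ W = Finset.univ →
      U.card = ⌊c₁ * Real.log n⌋₊ → V.card = ⌊c₁ * Real.log n⌋₊ →
    ∃ U' ⊆ U, ∃ V' ⊆ V, ∃ W' ⊆ W,
      U'.card = ⌊c₂ * Real.log n⌋₊ ∧ V'.card = ⌊c₂ * Real.log n⌋₊ ∧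
      W'.card = ⌊c₂ * Real.log n⌋₊ ∧
      (∀ u ∈ U', ∀ w ∈ W', G.Adj u w) ∧ (∀ v ∈ V', ∀ w ∈ W', G.Adj v w) := by
  have h16ε : (1:ℝ) < 16/ε := by
    rw [lt_div_iff₀ hε]; linarith
  have hlog16 : 0 < Real.log (16/ε) := Real.log_pos h16ε
  set c₂ : ℝ := min (ε * c₁ / 100) (1 / (4 * Real.log (16/ε))) with hc₂def
  have hc₂pos : 0 < c₂ := lt_min (by positivity) (by positivity)
  have hc₂a : c₂ ≤ ε * c₁ / 100 := min_le_left _ _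
  have hc₂b : c₂ ≤ 1 / (4 * Real.log (16/ε)) := min_le_right _ _
  refine ⟨c₂, hc₂pos, max (max ⌈Real.exp (9/(ε*c₁))⌉₊ ⌈(8*c₁/ε)^2⌉₊) ⌈(12*c₂/ε)^4⌉₊,
    fun n hn α _ _ G hcard hdeg U V W hUV hUW hVW hUVW hU hV => ?_⟩
  classical
  -- basic size facts
  have hnA : (⌈Real.exp (9/(ε*c₁))⌉₊ : ℕ) ≤ n := le_trans (le_trans (le_max_left _ _) (le_max_left _ _)) hn
  have hnB : (⌈(8*c₁/ε)^2⌉₊ : ℕ) ≤ n := le_trans (le_trans (le_max_right _ _) (le_max_left _ _)) hn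
  have hnC : (⌈(12*c₂/ε)^4⌉₊ : ℕ) ≤ n := le_trans (le_max_right _ _) hn
  have hn0 : 0 < n := lt_of_lt_of_le (Nat.ceil_pos.mpr (Real.exp_pos _)) hnA
  have hn0R : (0:ℝ) < n := by exact_mod_cast hn0
  have hexp_le : Real.exp (9/(ε*c₁)) ≤ (n:ℝ) :=
    le_trans (Nat.le_ceil _) (by exact_mod_cast hnA)
  have hBle : ((8*c₁/ε)^2 : ℝ) ≤ (n:ℝ) := le_trans (Nat.le_ceil _) (by exact_mod_cast hnB)
  have hCle : ((12*c₂/ε)^4 : ℝ) ≤ (n:ℝ) := le_trans (Nat.le_ceil _) (by exact_mod_cast hnC)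
  set L := Real.log n with hLdef
  have hlogA : 9/(ε*c₁) ≤ L := (Real.le_log_iff_exp_le hn0R).2 hexp_le
  have hL0 : 0 ≤ L := le_trans (by positivity) hlogA
  have hP : 9/ε ≤ c₁ * L := by
    have h1 := mul_le_mul_of_nonneg_left hlogA hc₁.le
    have h2 : c₁ * (9/(ε*c₁)) = 9/ε := by field_simp
    linarith
  have h9 : 9 ≤ ε * (c₁ * L) := by
    have := (div_le_iff₀ hε).mp hP
    linarith
  have hP36 : 36 ≤ c₁ * L := by
    have h36 : (36:ℝ) ≤ 9/ε := by rw [le_div_iff₀ hε]; linarith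
    linarith
  set m := ⌊c₁ * L⌋₊ with hmdef
  set a := ⌊c₂ * L⌋₊ with hadef
  have hmU : (m:ℝ) ≤ c₁ * L := Nat.floor_le (by positivity)
  have hmL : c₁ * L - 1 < (m:ℝ) := Nat.sub_one_lt_floor _
  have hm35 : 35 ≤ (m:ℝ) := by linarith
  have hmpos : 0 < m := by
    have : (0:ℝ) < (m:ℝ) := by linarith
    exact_mod_cast this
  have hmposR : (0:ℝ) < (m:ℝ) := by linarith
  have haU : (a:ℝ) ≤ c₂ * L := Nat.floor_le (by positivity)
  have ham : a ≤ m := by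
    apply Nat.floor_le_floor
    have hc21 : c₂ ≤ c₁ := by
      have h1 : ε * c₁ ≤ 100 * c₁ := mul_le_mul_of_nonneg_right (by linarith) hc₁.le
      have h2 : ε * c₁ / 100 ≤ c₁ := by linarith
      linarith
    exact mul_le_mul_of_nonneg_right hc21 hL0
  have haQ : (a:ℝ) ≤ ε * (c₁ * L) / 100 := by
    have := mul_le_mul_of_nonneg_right hc₂a hL0
    calc (a:ℝ) ≤ c₂ * L := haU
      _ ≤ (ε * c₁ / 100) * L := this
      _ = ε * (c₁ * L) / 100 := by ring
  have hεm : ε * (c₁ * L) - ε ≤ ε * (m:ℝ) := by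
    have := mul_le_mul_of_nonneg_left (le_of_lt hmL) hε.le
    linarith [mul_le_mul_of_nonneg_left (le_of_lt hmL) hε.le]
  have hεm8 : 8 ≤ ε * (m:ℝ) := by linarith
  have h16a : 16 * (a:ℝ) ≤ ε * (m:ℝ) := by linarith
  set k := ⌊ε * (m:ℝ) / 8⌋₊ + 1 with hkdef
  have hkl : ε * (m:ℝ) / 8 < (k:ℝ) := by
    rw [hkdef]; push_cast; exact Nat.lt_floor_add_one _
  have hku : (k:ℝ) ≤ ε * (m:ℝ) / 8 + 1 := by
    rw [hkdef]; push_cast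
    have := Nat.floor_le (show (0:ℝ) ≤ ε * (m:ℝ) / 8 by positivity)
    linarith
  have hk4 : (k:ℝ) ≤ ε * (m:ℝ) / 4 := by linarith
  have hak : a ≤ k := by
    have : (a:ℝ) < (k:ℝ) := by linarith
    exact le_of_lt (by exact_mod_cast this)
  have hkm : k ≤ m := by
    have hεm4 : ε * (m:ℝ) ≤ (1/4) * (m:ℝ) :=
      mul_le_mul_of_nonneg_right hε4 (Nat.cast_nonneg m)
    have : (k:ℝ) ≤ (m:ℝ) := by linarith
    exact_mod_cast this
  have hka : ε * (m:ℝ) / 16 ≤ ((k - a : ℕ) : ℝ) := by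
    rw [Nat.cast_sub hak]
    linarith
  -- square root facts
  have hsqn_pos : (0:ℝ) < Real.sqrt n := Real.sqrt_pos.mpr hn0R
  have hssq_pos : (0:ℝ) < Real.sqrt (Real.sqrt n) := Real.sqrt_pos.mpr hsqn_pos
  have hsq : Real.sqrt n * Real.sqrt n = (n:ℝ) := Real.mul_self_sqrt hn0R.le
  have hssq : Real.sqrt (Real.sqrt n) * Real.sqrt (Real.sqrt n) = Real.sqrt n :=
    Real.mul_self_sqrt (Real.sqrt_nonneg _)
  have hlogsq : Real.log (Real.sqrt n) = L / 2 := Real.log_sqrt hn0R.le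
  have hlogssq : Real.log (Real.sqrt (Real.sqrt n)) = L / 4 := by
    rw [Real.log_sqrt (Real.sqrt_nonneg _), hlogsq]; ring
  have hLsqrt : L ≤ 2 * Real.sqrt n := by
    have := Real.log_le_sub_one_of_pos hsqn_pos
    rw [hlogsq] at this; linarith
  have hLssq : L ≤ 4 * Real.sqrt (Real.sqrt n) := by
    have := Real.log_le_sub_one_of_pos hssq_pos
    rw [hlogssq] at this; linarith
  have hB8 : 8 * c₁ ≤ ε * Real.sqrt n := by
    have h1 : Real.sqrt ((8*c₁/ε)^2) ≤ Real.sqrt n := Real.sqrt_le_sqrt hBle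
    rw [Real.sqrt_sq (by positivity)] at h1
    rw [div_le_iff₀ hε] at h1; linarith [h1]
  have hC12 : 12 * c₂ ≤ ε * Real.sqrt (Real.sqrt n) := by
    have h1 : Real.sqrt ((12*c₂/ε)^4) ≤ Real.sqrt n := Real.sqrt_le_sqrt hCle
    have h2 : ((12*c₂/ε)^4 : ℝ) = ((12*c₂/ε)^2)^2 := by ring
    rw [h2, Real.sqrt_sq (by positivity)] at h1
    have h3 : Real.sqrt ((12*c₂/ε)^2) ≤ Real.sqrt (Real.sqrt n) := Real.sqrt_le_sqrt h1
    rw [Real.sqrt_sq (by positivity)] at h3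
    rw [div_le_iff₀ hε] at h3; linarith [h3]
  have h4m : 4 * (m:ℝ) ≤ ε * n := by
    have h1 : c₁ * L ≤ c₁ * (2 * Real.sqrt n) := mul_le_mul_of_nonneg_left hLsqrt hc₁.le
    have h2 : 8 * c₁ * Real.sqrt n ≤ ε * (n:ℝ) := by
      calc 8 * c₁ * Real.sqrt n ≤ (ε * Real.sqrt n) * Real.sqrt n :=
            mul_le_mul_of_nonneg_right hB8 (Real.sqrt_nonneg _)
        _ = ε * (n:ℝ) := by rw [mul_assoc, hsq]
    linarith only [h1, h2, hmU]
  -- degree facts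
  have hdeg' : ∀ v : α, ((1:ℝ)/2 + ε) * n ≤ ((Finset.univ.filter (G.Adj v)).card : ℝ) := by
    intro v
    have h1 := hdeg v
    have h2 : Nat.card {w : α | G.Adj v w} = (Finset.univ.filter (G.Adj v)).card := by
      rw [Nat.card_eq_card_toFinset, Set.toFinset_setOf]
    rwa [h2] at h1
  have hWdeg : ∀ u : α, ((1:ℝ)/2 + ε) * n - 2 * m ≤ ((W.filter (G.Adj u)).card : ℝ) := by
    intro u
    have h1 := hdeg' u
    have h2 : (Finset.univ.filter (G.Adj u)).card
        ≤ U.card + V.card + (W.filter (G.Adj u)).card := by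
      rw [← hUVW, Finset.filter_union, Finset.filter_union]
      refine le_trans (Finset.card_union_le _ _) ?_
      have h3 := Finset.card_union_le (U.filter (G.Adj u)) (V.filter (G.Adj u))
      have h4 := Finset.card_filter_le U (G.Adj u)
      have h5 := Finset.card_filter_le V (G.Adj u)
      omega
    have h6 : ((Finset.univ.filter (G.Adj u)).card : ℝ)
        ≤ (m:ℝ) + (m:ℝ) + ((W.filter (G.Adj u)).card : ℝ) := by
      rw [hmdef]
      rw [hU, hV] at h2
      exact_mod_cast h2
    linarith
  -- lower bound for the edge sums
  have hSsum : ∀ X : Finset α, X.card = m →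
      (m:ℝ) * (((1:ℝ)/2 + ε) * n - 2 * m) ≤ ∑ w ∈ W, ((X.filter (G.Adj w)).card : ℝ) := by
    intro X hX
    have h1 : ∑ w ∈ W, ((X.filter (G.Adj w)).card : ℝ)
        = ∑ u ∈ X, ((W.filter (G.Adj u)).card : ℝ) := by
      have := sum_adj_comm G X W
      push_cast [this]
      norm_cast
    rw [h1]
    have h2 := Finset.card_nsmul_le_sum X (fun u => ((W.filter (G.Adj u)).card : ℝ))
      (((1:ℝ)/2 + ε) * n - 2 * m) (fun u _ => hWdeg u)
    rw [hX] at h2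
    rwa [nsmul_eq_mul] at h2
  -- the set B of well-connected vertices of W
  set p : α → Prop := fun w => k ≤ (U.filter (G.Adj w)).card ∧ k ≤ (V.filter (G.Adj w)).card
    with hpdef
  set B := W.filter p with hBdef
  have hBsubW : B ⊆ W := Finset.filter_subset _ _
  have hWn : (W.card : ℝ) ≤ n := by
    have := Finset.card_le_univ W
    rw [hcard] at this
    exact_mod_cast this
  have hFnat : ∑ w ∈ W, ((U.filter (G.Adj w)).card + (V.filter (G.Adj w)).card)
      ≤ B.card * (2 * m) + W.card * (m + (k - 1)) := by
    rw [← Finset.sum_filter_add_sum_filter_not W p]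
    have hpart1 : ∑ w ∈ W.filter p, ((U.filter (G.Adj w)).card + (V.filter (G.Adj w)).card)
        ≤ B.card * (2 * m) := by
      rw [hBdef]
      refine le_trans (Finset.sum_le_card_nsmul _ _ (2 * m) fun w _ => ?_) (by rw [smul_eq_mul])
      have h4 := Finset.card_filter_le U (G.Adj w)
      have h5 := Finset.card_filter_le V (G.Adj w)
      rw [hU] at h4; rw [hV] at h5
      omega
    have hpart2 : ∑ w ∈ W.filter (fun w => ¬ p w),
          ((U.filter (G.Adj w)).card + (V.filter (G.Adj w)).card)
        ≤ W.card * (m + (k - 1)) := by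
      refine le_trans (Finset.sum_le_card_nsmul _ _ (m + (k-1)) fun w hw => ?_) ?_
      · have hw' := (Finset.mem_filter.1 hw).2
        simp only [hpdef] at hw'
        push_neg at hw'
        have h4 := Finset.card_filter_le U (G.Adj w)
        have h5 := Finset.card_filter_le V (G.Adj w)
        rw [hU] at h4; rw [hV] at h5
        rcases le_or_gt k ((U.filter (G.Adj w)).card) with h | h
        · have := hw' h
          omega
        · omega
      · rw [smul_eq_mul]
        exact Nat.mul_le_mul_right _ (Finset.card_filter_le _ _)
    exact Nat.add_le_add hpart1 hpart2
  have hBcard : ε * n / 3 ≤ (B.card : ℝ) := by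
    have hFlow : (m:ℝ) * ((1 + ε) * n)
        ≤ ∑ w ∈ W, (((U.filter (G.Adj w)).card : ℝ) + ((V.filter (G.Adj w)).card : ℝ)) := by
      rw [Finset.sum_add_distrib]
      have h1 := hSsum U hU
      have h2 := hSsum V hV
      have h3 : (m:ℝ) * (4 * (m:ℝ)) ≤ (m:ℝ) * (ε * n) :=
        mul_le_mul_of_nonneg_left h4m hmposR.le
      linarith only [h1, h2, h3]
    have hFup : ∑ w ∈ W, (((U.filter (G.Adj w)).card : ℝ) + ((V.filter (G.Adj w)).card : ℝ))
        ≤ (B.card : ℝ) * (2 * m) + (n:ℝ) * ((m:ℝ) + ((k:ℝ) - 1)) := by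
      have h1 : (∑ w ∈ W, (((U.filter (G.Adj w)).card + (V.filter (G.Adj w)).card) : ℕ) : ℝ)
          ≤ (B.card : ℝ) * (2 * m) + (W.card : ℝ) * ((m:ℝ) + ((k:ℝ) - 1)) := by
        have h2 : (((k - 1 : ℕ)) : ℝ) = (k:ℝ) - 1 := by
          have : 1 ≤ k := Nat.le_add_left 1 _
          push_cast [Nat.cast_sub this]
          ring
        calc (∑ w ∈ W, (((U.filter (G.Adj w)).card + (V.filter (G.Adj w)).card) : ℕ) : ℝ)
            ≤ ((B.card * (2 * m) + W.card * (m + (k - 1)) : ℕ) : ℝ) := by exact_mod_cast hFnat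
          _ = (B.card : ℝ) * (2 * m) + (W.card : ℝ) * ((m:ℝ) + ((k:ℝ) - 1)) := by
              push_cast [h2]; ring
      have h3 : ((W.card : ℝ)) * ((m:ℝ) + ((k:ℝ) - 1)) ≤ (n:ℝ) * ((m:ℝ) + ((k:ℝ) - 1)) := by
        apply mul_le_mul_of_nonneg_right hWn
        linarith
      calc ∑ w ∈ W, (((U.filter (G.Adj w)).card : ℝ) + ((V.filter (G.Adj w)).card : ℝ))
          = (∑ w ∈ W, (((U.filter (G.Adj w)).card + (V.filter (G.Adj w)).card) : ℕ) : ℝ) := by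
            push_cast; ring
        _ ≤ (B.card : ℝ) * (2 * m) + (W.card : ℝ) * ((m:ℝ) + ((k:ℝ) - 1)) := h1
        _ ≤ (B.card : ℝ) * (2 * m) + (n:ℝ) * ((m:ℝ) + ((k:ℝ) - 1)) := by linarith
    -- combine: m(1+ε)n ≤ 2m|B| + n(m + k - 1), k ≤ εm/4
    have hmain : (m:ℝ) * ((3 * ε / 4) * n) ≤ (m:ℝ) * (2 * (B.card : ℝ)) := by
      have hnk : (n:ℝ) * ((m:ℝ) + ((k:ℝ) - 1)) ≤ (n:ℝ) * ((m:ℝ) * (1 + ε/4)) := by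
        apply mul_le_mul_of_nonneg_left _ hn0R.le
        have hεm4 : ε * (m:ℝ) / 4 * (0:ℝ) = 0 := by ring
        linarith [hk4, mul_nonneg hε.le (Nat.cast_nonneg m : (0:ℝ) ≤ (m:ℝ))]
      linarith only [hFlow, hFup, hnk]
    have := le_of_mul_le_mul_left hmain hmposR
    linarith
  -- counting complete bipartite configurations
  have hmC_pos : 0 < m.choose a := Nat.choose_pos ham
  have hmCR : (0:ℝ) < (m.choose a : ℝ) := by exact_mod_cast hmC_pos
  have hPUne : (U.powersetCard a).Nonempty := Finset.powersetCard_nonempty.mpr (by rw [hU]; exact ham)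
  have hPVne : (V.powersetCard a).Nonempty := Finset.powersetCard_nonempty.mpr (by rw [hV]; exact ham)
  set tot := ∑ w ∈ B, ((U.filter (G.Adj w)).card.choose a) * ((V.filter (G.Adj w)).card.choose a)
    with htotdef
  have htot1 : B.card * (k.choose a * k.choose a) ≤ tot := by
    refine le_trans (by rw [smul_eq_mul]) (Finset.card_nsmul_le_sum B _ _ fun w hw => ?_)
    have hw' := (Finset.mem_filter.1 hw).2
    simp only [hpdef] at hw'
    exact Nat.mul_le_mul (Nat.choose_le_choose a hw'.1) (Nat.choose_le_choose a hw'.2)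
  have hidR : (tot:ℝ) = ∑ S ∈ U.powersetCard a, ∑ T ∈ V.powersetCard a,
      (((B.filter (fun w => (∀ u ∈ S, G.Adj w u) ∧ (∀ v ∈ T, G.Adj w v))).card : ℕ) : ℝ) := by
    rw [htotdef, count_identity G a U V B]
    push_cast
    refine Finset.sum_congr rfl fun S _ => Finset.sum_congr rfl fun T _ => ?_
    congr 1
    · congr 1
      exact Finset.filter_congr_decidable ..
  obtain ⟨S, hSmem, hSge⟩ : ∃ S ∈ U.powersetCard a, (tot:ℝ)/(m.choose a)
      ≤ ∑ T ∈ V.powersetCard a,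
        (((B.filter (fun w => (∀ u ∈ S, G.Adj w u) ∧ (∀ v ∈ T, G.Adj w v))).card : ℕ) : ℝ) := by
    apply Finset.exists_le_of_sum_le hPUne
    have e1 : ∑ _S ∈ U.powersetCard a, (tot:ℝ)/(m.choose a) = (tot:ℝ) := by
      rw [Finset.sum_const, Finset.card_powersetCard, hU, nsmul_eq_mul,
        mul_div_cancel₀ _ (ne_of_gt hmCR)]
    rw [e1]
    exact hidR.le
  obtain ⟨T, hTmem, hTge⟩ : ∃ T ∈ V.powersetCard a, (tot:ℝ)/(m.choose a)/(m.choose a)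
      ≤ (((B.filter (fun w => (∀ u ∈ S, G.Adj w u) ∧ (∀ v ∈ T, G.Adj w v))).card : ℕ) : ℝ) := by
    apply Finset.exists_le_of_sum_le hPVne
    have e1 : ∑ _T ∈ V.powersetCard a, (tot:ℝ)/(m.choose a)/(m.choose a)
        = (tot:ℝ)/(m.choose a) := by
      rw [Finset.sum_const, Finset.card_powersetCard, hV, nsmul_eq_mul,
        mul_div_cancel₀ _ (ne_of_gt hmCR)]
    rw [e1]
    exact hSge
  -- lower bound on the count for the chosen pair
  set r : ℝ := ε / 16 with hrdef
  have hrpos : (0:ℝ) < r := by positivity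
  have hcr : (m.choose a : ℝ) * r ^ a ≤ (k.choose a : ℝ) := by
    have h1 : (m.choose a : ℝ) * (((k - a : ℕ):ℝ)) ^ a ≤ (k.choose a : ℝ) * ((m:ℝ)) ^ a := by
      exact_mod_cast choose_ratio a k m hak hkm
    have hrm : r * (m:ℝ) ≤ ((k - a : ℕ):ℝ) := by
      rw [hrdef]
      linarith [hka]
    have hmpow : (0:ℝ) < ((m:ℝ)) ^ a := by positivity
    have h2 : (m.choose a : ℝ) * r ^ a * ((m:ℝ)) ^ a ≤ (k.choose a : ℝ) * ((m:ℝ)) ^ a := by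
      have h3 : (r * (m:ℝ)) ^ a ≤ (((k - a : ℕ):ℝ)) ^ a :=
        pow_le_pow_left₀ (by positivity) hrm a
      calc (m.choose a : ℝ) * r ^ a * ((m:ℝ)) ^ a
          = (m.choose a : ℝ) * (r * (m:ℝ)) ^ a := by rw [mul_pow]; ring
        _ ≤ (m.choose a : ℝ) * (((k - a : ℕ):ℝ)) ^ a :=
            mul_le_mul_of_nonneg_left h3 (Nat.cast_nonneg _)
        _ ≤ (k.choose a : ℝ) * ((m:ℝ)) ^ a := h1
    exact le_of_mul_le_mul_right h2 hmpow
  have hcnt_low : (B.card : ℝ) * (r ^ a * r ^ a)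
      ≤ (((B.filter (fun w => (∀ u ∈ S, G.Adj w u) ∧ (∀ v ∈ T, G.Adj w v))).card : ℕ) : ℝ) := by
    refine le_trans ?_ hTge
    rw [div_div, le_div_iff₀ (mul_pos hmCR hmCR)]
    calc (B.card : ℝ) * (r ^ a * r ^ a) * ((m.choose a : ℝ) * (m.choose a : ℝ))
        = (B.card : ℝ) * (((m.choose a : ℝ) * r ^ a) * ((m.choose a : ℝ) * r ^ a)) := by ring
      _ ≤ (B.card : ℝ) * ((k.choose a : ℝ) * (k.choose a : ℝ)) :=
          mul_le_mul_of_nonneg_left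
            (mul_le_mul hcr hcr (by positivity) (Nat.cast_nonneg _)) (Nat.cast_nonneg _)
      _ ≤ (tot:ℝ) := by exact_mod_cast htot1
  -- now the analytic bound
  have hra : Real.exp (-(L/2)) ≤ r ^ a * r ^ a := by
    have h1 : r ^ a * r ^ a = Real.exp ((2*a : ℕ) * Real.log r) := by
      rw [Real.exp_nat_mul, Real.exp_log hrpos, two_mul, pow_add]
    rw [h1]
    apply Real.exp_le_exp.mpr
    have hlogr : Real.log r = -(Real.log (16/ε)) := by
      rw [hrdef]
      have : ε / 16 = (16/ε)⁻¹ := by field_simp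
      rw [this, Real.log_inv]
    rw [hlogr]
    have hc₂log : c₂ * Real.log (16/ε) ≤ 1/4 := by
      have := mul_le_mul_of_nonneg_right hc₂b hlog16.le
      rw [div_mul_eq_mul_div, one_mul] at this
      calc c₂ * Real.log (16/ε) ≤ Real.log (16/ε) / (4 * Real.log (16/ε)) := this
        _ = 1/4 := by
          have h0 : Real.log (16/ε) ≠ 0 := ne_of_gt hlog16
          field_simp
    have ha4 : (a:ℝ) * Real.log (16/ε) ≤ L / 4 := by
      calc (a:ℝ) * Real.log (16/ε) ≤ (c₂ * L) * Real.log (16/ε) :=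
            mul_le_mul_of_nonneg_right haU hlog16.le
        _ = (c₂ * Real.log (16/ε)) * L := by ring
        _ ≤ (1/4) * L := mul_le_mul_of_nonneg_right hc₂log hL0
        _ = L / 4 := by ring
    push_cast
    linarith [ha4]
  have hfinal : (a:ℝ)
      ≤ (((B.filter (fun w => (∀ u ∈ S, G.Adj w u) ∧ (∀ v ∈ T, G.Adj w v))).card : ℕ) : ℝ) := by
    have h1 : (ε * n / 3) * Real.exp (-(L/2)) = (ε/3) * Real.sqrt n := by
      rw [show ε * (n:ℝ) / 3 * Real.exp (-(L/2)) = (ε/3) * ((n:ℝ) * Real.exp (-(L/2))) by ring]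
      rw [show ((n:ℝ)) * Real.exp (-(L/2)) = Real.exp L * Real.exp (-(L/2)) by
        rw [Real.exp_log hn0R]]
      rw [← Real.exp_add, show L + -(L/2) = L/2 by ring, Real.exp_half, Real.exp_log hn0R]
    have h2 : (ε * n / 3) * Real.exp (-(L/2)) ≤ (B.card : ℝ) * (r ^ a * r ^ a) := by
      have hrr : (0:ℝ) ≤ r ^ a * r ^ a := by positivity
      have hε3 : (0:ℝ) ≤ ε * n / 3 := by positivity
      calc (ε * n / 3) * Real.exp (-(L/2)) ≤ (ε * n / 3) * (r ^ a * r ^ a) :=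
            mul_le_mul_of_nonneg_left hra hε3
        _ ≤ (B.card : ℝ) * (r ^ a * r ^ a) := mul_le_mul_of_nonneg_right hBcard hrr
    have h3 : (a:ℝ) ≤ (ε/3) * Real.sqrt n := by
      have ha1 : (a:ℝ) ≤ 4 * c₂ * Real.sqrt (Real.sqrt n) := by
        calc (a:ℝ) ≤ c₂ * L := haU
          _ ≤ c₂ * (4 * Real.sqrt (Real.sqrt n)) := mul_le_mul_of_nonneg_left hLssq hc₂pos.le
          _ = 4 * c₂ * Real.sqrt (Real.sqrt n) := by ring
      have ha2 : (4 * c₂) * Real.sqrt (Real.sqrt n) ≤ (ε/3) * Real.sqrt n := by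
        calc (4 * c₂) * Real.sqrt (Real.sqrt n)
            ≤ ((ε/3) * Real.sqrt (Real.sqrt n)) * Real.sqrt (Real.sqrt n) :=
              mul_le_mul_of_nonneg_right (by linarith [hC12]) (Real.sqrt_nonneg _)
          _ = (ε/3) * Real.sqrt n := by rw [mul_assoc, hssq]
      linarith
    linarith [h2, h1.symm.le, hcnt_low]
  have hacnt : a ≤ (B.filter (fun w => (∀ u ∈ S, G.Adj w u) ∧ (∀ v ∈ T, G.Adj w v))).card := by
    exact_mod_cast hfinal
  -- extract the sets
  obtain ⟨W', hW'sub, hW'card⟩ := Finset.exists_subset_card_eq hacnt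
  obtain ⟨hS1, hS2⟩ := Finset.mem_powersetCard.1 hSmem
  obtain ⟨hT1, hT2⟩ := Finset.mem_powersetCard.1 hTmem
  refine ⟨S, hS1, T, hT1, W', ?_, hS2, hT2, hW'card, ?_, ?_⟩
  · intro w hw
    exact hBsubW (Finset.filter_subset _ _ (hW'sub hw))
  · intro u hu w hw
    have := (Finset.mem_filter.1 (hW'sub hw)).2.1 u hu
    exact this.symm
  · intro v hv w hw
    have := (Finset.mem_filter.1 (hW'sub hw)).2.2 v hv
    exact this.symm

/-- Connecting blow-ups: for `ε, c₁ ≫ c₂ ≫ 1/n`, in any `n`-vertex graph with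
minimum degree `(1/2+ε)n` and partition `{U,V,W}` with `|U| = |V| = ⌊c₁ log n⌋`, there are
`⌊c₂ log n⌋`-sets `U' ⊆ U`, `V' ⊆ V`, `W' ⊆ W` with `K(U',W'), K(V',W') ⊆ G`. -/
theorem stmt4 (ε c₁ : ℝ) (hε : 0 < ε) (hc₁ : 0 < c₁) :
    ∃ c₂ : ℝ, 0 < c₂ ∧ ∃ n₀ : ℕ, ∀ n : ℕ, n₀ ≤ n →
    ∀ (α : Type) [Fintype α] [DecidableEq α] (G : SimpleGraph α), Fintype.card α = n →
    (∀ v : α, ((1:ℝ)/2 + ε) * n ≤ Nat.card {w : α | G.Adj v w}) →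
    ∀ U V W : Finset α, Disjoint U V → Disjoint U W → Disjoint V W →
      U ∪ V ∪ W = Finset.univ →
      U.card = ⌊c₁ * Real.log n⌋₊ → V.card = ⌊c₁ * Real.log n⌋₊ →
    ∃ U' ⊆ U, ∃ V' ⊆ V, ∃ W' ⊆ W,
      U'.card = ⌊c₂ * Real.log n⌋₊ ∧ V'.card = ⌊c₂ * Real.log n⌋₊ ∧
      W'.card = ⌊c₂ * Real.log n⌋₊ ∧
      (∀ u ∈ U', ∀ w ∈ W', G.Adj u w) ∧ (∀ v ∈ V', ∀ w ∈ W', G.Adj v w) := by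
  obtain ⟨c₂, hc₂, n₀, h⟩ := key_lemma (min ε (1/4)) c₁ (lt_min hε (by norm_num))
    (min_le_right _ _) hc₁
  refine ⟨c₂, hc₂, n₀, fun n hn α _ _ G hcard hdeg => ?_⟩
  refine h n hn α G hcard (fun v => le_trans ?_ (hdeg v))
  apply mul_le_mul_of_nonneg_right _ (Nat.cast_nonneg n)
  have := min_le_left ε (1/4)
  linarith
end

section
/- Let ε > 0 and let G be an n-vertex graph with δ(G) ≥ (1/2 + ε)n, where 1/s is sufficiently small compared to ε and 1/n sufficiently small compared to 1/s. Let P be the s-uniform hypergraph on V(G) where an s-set S is an edge if and only if the induced subgraph G[S] has minimum degree at least (1/2 + ε/2)s. Then δ₁(P) ≥ (1 − e^{−√s})·C(n−1, s−1). -/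
/-!
Fix `x`. An `s`-set `S ∋ x` is bad only if some `v ∈ S` has at most `m = ⌊(1/2 + ε/2)s⌋`
neighbours in `S`. With `W = {x, v}`, such sets are `T ∪ W` where `T` is an `(s - |W|)`-subset of
`V \ W` meeting the `a ≥ (1/2 + ε)n - 2` available neighbours of `v` in at most `m` vertices; their
number is a lower tail `∑_{j ≤ m} C(a, j) C(b, k - j)` of a hypergeometric sum. Since `a` exceeds
`b` by about `2εn`, its terms grow by a factor `1/(1 - ε/2)` at every step up to
`m' = ⌊(1/2 + 5ε/8)s⌋`, so the tail is at most `(2/ε)(1 - ε/2)^(m' - m)` times the whole sum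
`C(n - |W|, s - |W|)`, and `m' - m ≥ εs/16`. Summing over `v` bounds the number of bad sets by
`(2/ε) s e^{-ε²s/32} C(n - 1, s - 1)`, which is at most `e^{-√s} C(n - 1, s - 1)` once `s` is large.
-/

open Finset Real

theorem sum_range_le_of_le_mul_succ {t : ℕ → ℝ} {β : ℝ} {m m' : ℕ} (hβ0 : 0 ≤ β) (hβ1 : β < 1)
    (hm : m ≤ m') (ht : ∀ j < m', t j ≤ β * t (j + 1)) (ht0 : 0 ≤ t m') :
    ∑ j ∈ range (m + 1), t j ≤ β ^ (m' - m) / (1 - β) * t m' := by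
  have hpow : ∀ i ≤ m', t (m' - i) ≤ β ^ i * t m' := by
    intro i hi
    induction i with
    | zero => simp
    | succ i ih =>
      calc t (m' - (i + 1)) ≤ β * t (m' - (i + 1) + 1) := ht _ (by omega)
        _ = β * t (m' - i) := by rw [show m' - (i + 1) + 1 = m' - i by omega]
        _ ≤ β * (β ^ i * t m') := by gcongr; exact ih (by omega)
        _ = β ^ (i + 1) * t m' := by ring
  calc ∑ j ∈ range (m + 1), t j = ∑ j ∈ range (m + 1), t (m' - (m' - j)) :=
        sum_congr rfl fun j hj => by rw [Nat.sub_sub_self (by grind)]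
    _ ≤ ∑ j ∈ range (m + 1), β ^ (m' - j) * t m' :=
        sum_le_sum fun j _ => hpow _ (Nat.sub_le _ _)
    _ = (∑ i ∈ Ico (m' - m) (m' + 1), β ^ i) * t m' := by
        rw [sum_mul, range_eq_Ico, sum_Ico_reflect (fun i => β ^ i * t m') 0 (by omega)]
        congr 2
        omega
    _ ≤ β ^ (m' - m) / (1 - β) * t m' := by
        gcongr; exact geom_sum_Ico_le_of_lt_one hβ0 hβ1

theorem Nat.choose_mul_choose_le_mul_succ {a b k j : ℕ} {β : ℝ} (hja : j < a) (hjk : j < k)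
    (h : (j + 1) * b ≤ β * ((a - j) * (k - j))) :
    (a.choose j * b.choose (k - j) : ℝ) ≤ β * (a.choose (j + 1) * b.choose (k - (j + 1))) := by
  have hsucc : k - (j + 1) + 1 = k - j := by omega
  have hid : (a.choose (j + 1) * b.choose (k - (j + 1)) : ℝ) * ((j + 1) * (b - (k - (j + 1)) : ℕ))
      = a.choose j * b.choose (k - j) * ((a - j) * (k - j)) := by
    have h₁ := Nat.choose_succ_right_eq a j
    have h₂ := Nat.choose_succ_right_eq b (k - (j + 1))
    rw [hsucc] at h₂
    have h₃ : ((k - j : ℕ) : ℝ) = k - j := by rw [Nat.cast_sub hjk.le]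
    rw [← h₃, ← Nat.cast_sub hja.le]
    exact_mod_cast (calc
      a.choose (j + 1) * b.choose (k - (j + 1)) * ((j + 1) * (b - (k - (j + 1))))
          = a.choose (j + 1) * (j + 1) * (b.choose (k - (j + 1)) * (b - (k - (j + 1)))) := by ring
        _ = a.choose j * (a - j) * (b.choose (k - j) * (k - j)) := by rw [h₁, h₂]
        _ = a.choose j * b.choose (k - j) * ((a - j) * (k - j)) := by ring)
  have hpos : (0 : ℝ) < (a - j) * (k - j) := by
    have : (j : ℝ) < a := by exact_mod_cast hja
    have : (j : ℝ) < k := by exact_mod_cast hjk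
    nlinarith
  refine le_of_mul_le_mul_right ?_ hpos
  calc (a.choose j * b.choose (k - j) : ℝ) * ((a - j) * (k - j))
      = a.choose (j + 1) * b.choose (k - (j + 1)) * ((j + 1) * (b - (k - (j + 1)) : ℕ)) := hid.symm
    _ ≤ a.choose (j + 1) * b.choose (k - (j + 1)) * ((j + 1) * b) := by
        gcongr; exact_mod_cast Nat.sub_le _ _
    _ ≤ a.choose (j + 1) * b.choose (k - (j + 1)) * (β * ((a - j) * (k - j))) := by gcongr
    _ = _ := by ring

theorem Nat.choose_mul_choose_le_add_choose (a b : ℕ) {j k : ℕ} (hjk : j ≤ k) :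
    a.choose j * b.choose (k - j) ≤ (a + b).choose k := by
  rw [Nat.add_choose_eq]
  exact single_le_sum (f := fun p : ℕ × ℕ => a.choose p.1 * b.choose p.2) (fun _ _ => Nat.zero_le _)
    (a := (j, k - j)) (mem_antidiagonal.2 (Nat.add_sub_cancel' hjk))

theorem sum_range_choose_mul_choose_le {a b k m m' : ℕ} {β : ℝ} (hβ0 : 0 ≤ β) (hβ1 : β < 1)
    (hm : m ≤ m') (hm'a : m' ≤ a) (hm'k : m' ≤ k)
    (h : m' * b ≤ β * ((a - m') * (k - m'))) :
    ∑ j ∈ range (m + 1), (a.choose j * b.choose (k - j) : ℝ) ≤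
      β ^ (m' - m) / (1 - β) * (a + b).choose k := by
  have hgrowth : ∀ j < m', (a.choose j * b.choose (k - j) : ℝ) ≤
      β * (a.choose (j + 1) * b.choose (k - (j + 1))) := by
    intro j hj
    refine Nat.choose_mul_choose_le_mul_succ (by omega) (by omega) ?_
    have hj' : (j : ℝ) + 1 ≤ m' := by exact_mod_cast hj
    have hm'a' : (m' : ℝ) ≤ a := by exact_mod_cast hm'a
    have hm'k' : (m' : ℝ) ≤ k := by exact_mod_cast hm'k
    calc ((j : ℝ) + 1) * b ≤ m' * b := by gcongr
      _ ≤ β * ((a - m') * (k - m')) := h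
      _ ≤ β * ((a - j) * (k - j)) := by gcongr; all_goals linarith
  calc ∑ j ∈ range (m + 1), (a.choose j * b.choose (k - j) : ℝ)
      ≤ β ^ (m' - m) / (1 - β) * (a.choose m' * b.choose (k - m') : ℝ) :=
        sum_range_le_of_le_mul_succ hβ0 hβ1 hm hgrowth (by positivity)
    _ ≤ β ^ (m' - m) / (1 - β) * (a + b).choose k := by
        have hβ' : 0 < 1 - β := by linarith
        gcongr
        exact_mod_cast Nat.choose_mul_choose_le_add_choose a b hm'k

theorem growth_bounds_of_dense {ε n s a b k m' : ℝ} (hε : 0 < ε) (hε2 : ε < 1 / 2)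
    (hn : 16 * (s + 2) ≤ ε * n) (hs : 32 ≤ ε * s) (ha : (1 / 2 + ε) * n - 2 ≤ a)
    (hb : b ≤ n - a) (hb0 : 0 ≤ b) (hk : s - 2 ≤ k)
    (hm' : m' ≤ (1 / 2 + 5 * ε / 8) * s) :
    m' ≤ a ∧ m' ≤ k ∧ m' * b ≤ (1 - ε / 2) * ((a - m') * (k - m')) := by
  have hs0 : 0 ≤ s := by nlinarith
  have hn0 : 0 ≤ n := by nlinarith
  have hA : (1 / 2 + 15 * ε / 16) * n ≤ a - m' := by nlinarith
  have hB : b ≤ (1 / 2 - 15 * ε / 16) * n := by nlinarith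
  have hK : (1 / 2 - 11 * ε / 16) * s ≤ k - m' := by nlinarith
  have hscalar : (1 / 2 + 5 * ε / 8) * (1 / 2 - 15 * ε / 16) ≤
      (1 - ε / 2) * ((1 / 2 + 15 * ε / 16) * (1 / 2 - 11 * ε / 16)) := by
    nlinarith [mul_pos hε (sub_pos.2 hε2), pow_pos hε 3]
  refine ⟨by nlinarith, by nlinarith, ?_⟩
  calc m' * b ≤ ((1 / 2 + 5 * ε / 8) * s) * ((1 / 2 - 15 * ε / 16) * n) := by gcongr
    _ = (1 / 2 + 5 * ε / 8) * (1 / 2 - 15 * ε / 16) * (n * s) := by ring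
    _ ≤ (1 - ε / 2) * ((1 / 2 + 15 * ε / 16) * (1 / 2 - 11 * ε / 16)) * (n * s) := by gcongr
    _ = (1 - ε / 2) * (((1 / 2 + 15 * ε / 16) * n) * ((1 / 2 - 11 * ε / 16) * s)) := by ring
    _ ≤ (1 - ε / 2) * ((a - m') * (k - m')) :=
        mul_le_mul_of_nonneg_left (mul_le_mul hA hK (by nlinarith) (by nlinarith)) (by linarith)

theorem mul_mul_exp_neg_le_exp_neg_sqrt {C c x : ℝ} (hC : 0 ≤ C) (hc : 0 < c) (hx : 1 ≤ √x)
    (hxC : (C + 3) / c ≤ √x) : C * x * exp (-(c * x)) ≤ exp (-√x) := by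
  have hx0 : 0 ≤ x := by
    by_contra h
    rw [sqrt_eq_zero'.2 (by linarith)] at hx
    norm_num at hx
  have hsq : √x * √x = x := mul_self_sqrt hx0
  have hxexp : x ≤ exp (2 * √x) := by
    have := add_one_le_exp √x
    calc x = √x * √x := hsq.symm
      _ ≤ exp √x * exp √x := mul_le_mul (by linarith) (by linarith) (sqrt_nonneg _) (exp_nonneg _)
      _ = exp (2 * √x) := by rw [← exp_add, two_mul]
  have hexponent : C + 3 * √x ≤ c * x := by
    rw [div_le_iff₀ hc] at hxC
    nlinarith
  calc C * x * exp (-(c * x)) ≤ exp C * exp (2 * √x) * exp (-(c * x)) := by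
        gcongr
        linarith [add_one_le_exp C]
    _ = exp (C + 2 * √x - c * x) := by rw [← exp_add, ← exp_add]; ring_nf
    _ ≤ exp (-√x) := exp_le_exp.2 (by linarith)

theorem eventually_mul_mul_exp_neg_le_exp_neg_sqrt {C c : ℝ} (hC : 0 ≤ C) (hc : 0 < c) :
    ∀ᶠ s : ℕ in Filter.atTop, C * s * exp (-(c * s)) ≤ exp (-√s) := by
  have hsqrt := tendsto_sqrt_atTop.comp tendsto_natCast_atTop_atTop
  filter_upwards [hsqrt.eventually_ge_atTop 1, hsqrt.eventually_ge_atTop ((C + 3) / c)]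
    with s hs1 hsC using mul_mul_exp_neg_le_exp_neg_sqrt hC hc hs1 hsC

theorem sub_sub_one_le_natFloor_sub_natFloor {p q : ℝ} (hp : 0 ≤ p) (hpq : p ≤ q) :
    q - p - 1 ≤ ((⌊q⌋₊ - ⌊p⌋₊ : ℕ) : ℝ) := by
  rw [Nat.cast_sub (Nat.floor_le_floor hpq)]
  linarith [Nat.floor_le hp, Nat.lt_floor_add_one q]

theorem one_sub_pow_le_exp_neg_mul {t : ℝ} (ht : t ≤ 1) (k : ℕ) :
    (1 - t) ^ k ≤ exp (-(t * k)) := by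
  calc (1 - t) ^ k ≤ exp (-t) ^ k := pow_le_pow_left₀ (by linarith) (one_sub_le_exp_neg t) k
    _ = exp (-(t * k)) := by rw [← exp_nat_mul]; ring_nf

section

variable {α : Type*} [DecidableEq α]

theorem card_filter_card_inter_le (U A : Finset α) (k m : ℕ) :
    #{T ∈ U.powersetCard k | #(T ∩ A) ≤ m} ≤
      ∑ j ∈ range (m + 1), (#(U ∩ A)).choose j * (#(U \ A)).choose (k - j) := by
  calc #{T ∈ U.powersetCard k | #(T ∩ A) ≤ m}
      ≤ #((range (m + 1)).biUnion fun j =>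
          (U ∩ A).powersetCard j ×ˢ (U \ A).powersetCard (k - j)) := by
        refine card_le_card_of_injOn (fun T => (T ∩ A, T \ A)) (fun T hT => ?_)
          (fun T _ T' _ h => ?_)
        · obtain ⟨hT, hTm⟩ := mem_filter.1 (mem_coe.1 hT)
          obtain ⟨hTU, hTk⟩ := mem_powersetCard.1 hT
          have := card_inter_add_card_sdiff T A
          simp only [mem_coe, mem_biUnion, mem_range, mem_product, mem_powersetCard]
          exact ⟨#(T ∩ A), by omega, ⟨inter_subset_inter_right hTU, rfl⟩,
            sdiff_subset_sdiff hTU le_rfl, by omega⟩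
        · simp only [Prod.mk.injEq] at h
          rw [← sdiff_union_inter T A, ← sdiff_union_inter T' A, h.1, h.2]
    _ ≤ _ := card_biUnion_le.trans_eq (by simp only [card_product, card_powersetCard])

variable [Fintype α]

theorem card_filter_exists_card_filter_adj_le (G : SimpleGraph α) [DecidableRel G.Adj] (x : α)
    (s m : ℕ) :
    #{S ∈ univ.powersetCard s | x ∈ S ∧ ∃ v ∈ S, #((S.erase v).filter (G.Adj v)) ≤ m} ≤
      ∑ v, #{T ∈ (univ \ {x, v}).powersetCard (s - #{x, v}) | #(T ∩ G.neighborFinset v) ≤ m} := by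
  calc _ ≤ #(univ.biUnion fun v => image (· ∪ {x, v})
          {T ∈ (univ \ {x, v}).powersetCard (s - #{x, v}) | #(T ∩ G.neighborFinset v) ≤ m}) := by
        refine card_le_card fun S hS => ?_
        obtain ⟨hS, hx, v, hv, hlow⟩ := mem_filter.1 hS
        have hW : {x, v} ⊆ S := insert_subset hx (singleton_subset_iff.2 hv)
        refine mem_biUnion.2 ⟨v, mem_univ _, mem_image.2 ⟨S \ {x, v}, mem_filter.2 ⟨?_, ?_⟩,
          sdiff_union_of_subset hW⟩⟩
        · exact mem_powersetCard.2 ⟨sdiff_subset_sdiff (subset_univ _) le_rfl,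
            by rw [card_sdiff_of_subset hW, (mem_powersetCard_univ.1 hS)]⟩
        · refine le_trans (card_le_card fun y hy => ?_) hlow
          simp only [mem_inter, mem_sdiff, mem_insert, mem_singleton, not_or,
            SimpleGraph.mem_neighborFinset] at hy
          exact mem_filter.2 ⟨mem_erase.2 ⟨hy.1.2.2, hy.1.1⟩, hy.2⟩
    _ ≤ _ := card_biUnion_le.trans (sum_le_sum fun v _ => card_image_le)

theorem sum_choose_card_sub_card_pair (x : α) {s : ℕ} (hs : 2 ≤ s) (hα : 2 ≤ Fintype.card α) :
    ∑ v : α, (Fintype.card α - #{x, v}).choose (s - #{x, v}) =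
      s * (Fintype.card α - 1).choose (s - 1) := by
  set n := Fintype.card α
  have hpair : ∀ v ∈ ({x}ᶜ : Finset α), #{x, v} = 2 := fun v hv =>
    card_pair_eq_two_iff.2 (Ne.symm (by simpa using hv))
  have hsucc := Nat.add_one_mul_choose_eq (n - 2) (s - 2)
  rw [show n - 2 + 1 = n - 1 by omega, show s - 2 + 1 = s - 1 by omega] at hsucc
  rw [Fintype.sum_eq_add_sum_compl x, sum_congr rfl fun v hv => by rw [hpair v hv], sum_const,
    card_compl, card_singleton, smul_eq_mul, pair_eq_singleton, card_singleton, hsucc]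
  obtain ⟨s', rfl⟩ : ∃ s', s = s' + 1 := ⟨s - 1, by omega⟩
  simp only [Nat.add_sub_cancel]
  ring

theorem card_filter_mem_and_add_card_filter_mem_and_not (P : Finset α → Prop) [DecidablePred P]
    (x : α) {s : ℕ} (hs : 1 ≤ s) :
    #{S ∈ univ.powersetCard s | x ∈ S ∧ P S} + #{S ∈ univ.powersetCard s | x ∈ S ∧ ¬P S} =
      (Fintype.card α - 1).choose (s - 1) := by
  rw [← filter_filter, ← filter_filter, card_filter_add_card_filter_not]
  simpa using card_filter_powersetCard_subset {x} univ s (subset_univ _) (by simpa using hs)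

theorem card_filter_card_inter_le_of_dense {ε : ℝ} {n s m m' : ℕ} (hε : 0 < ε) (hε2 : ε < 1 / 2)
    (hn : 16 * (s + 2) ≤ ε * n) (hs : 32 ≤ ε * s) (hmm' : m ≤ m')
    (hm' : (m' : ℝ) ≤ (1 / 2 + 5 * ε / 8) * s) (hcard : Fintype.card α = n) {W A : Finset α}
    (hW : #W ≤ 2) (hA : (1 / 2 + ε) * n ≤ #A) :
    (#{T ∈ (univ \ W).powersetCard (s - #W) | #(T ∩ A) ≤ m} : ℝ) ≤
      2 / ε * (1 - ε / 2) ^ (m' - m) * (n - #W).choose (s - #W) := by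
  set a := #((univ \ W) ∩ A)
  set b := #((univ \ W) \ A)
  have hab : a + b = n - #W := by
    rw [card_inter_add_card_sdiff, card_univ_sdiff, hcard]
  have haA : #A ≤ a + 2 := by
    have : #(A \ W) ≤ a := card_le_card fun y hy => by
      simp only [mem_sdiff, mem_inter, mem_univ, true_and] at hy ⊢
      tauto
    have := le_card_sdiff W A
    omega
  have hWs : #W ≤ s := by
    have : (64 : ℝ) ≤ s := by nlinarith
    have : 64 ≤ s := by exact_mod_cast this
    omega
  obtain ⟨hm'a, hm'k, hgrowth⟩ :=
    growth_bounds_of_dense (a := a) (b := b) (k := (s - #W : ℕ)) hε hε2 hn hs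
    (by rw [sub_le_iff_le_add]; exact hA.trans (by exact_mod_cast haA))
    (by rw [le_sub_iff_add_le']; exact_mod_cast (show a + b ≤ n by omega)) (Nat.cast_nonneg _)
    (by rw [Nat.cast_sub hWs]; gcongr; exact_mod_cast hW) hm'
  calc (#{T ∈ (univ \ W).powersetCard (s - #W) | #(T ∩ A) ≤ m} : ℝ)
      ≤ ∑ j ∈ range (m + 1), (a.choose j * b.choose (s - #W - j) : ℝ) := by
        exact_mod_cast card_filter_card_inter_le (univ \ W) A (s - #W) m
    _ ≤ (1 - ε / 2) ^ (m' - m) / (1 - (1 - ε / 2)) * (a + b).choose (s - #W) :=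
        sum_range_choose_mul_choose_le (by linarith) (by linarith) hmm' (by exact_mod_cast hm'a)
          (by exact_mod_cast hm'k) hgrowth
    _ = 2 / ε * (1 - ε / 2) ^ (m' - m) * (n - #W).choose (s - #W) := by
        rw [hab, sub_sub_cancel]
        field_simp

theorem card_filter_exists_card_filter_adj_le_of_dense (G : SimpleGraph α) [DecidableRel G.Adj]
    {ε : ℝ} {n s : ℕ} (hε : 0 < ε) (hε2 : ε < 1 / 2) (hs : 32 ≤ ε * s)
    (hn : 16 * (s + 2) ≤ ε * n) (hcard : Fintype.card α = n)
    (hdeg : ∀ v, (1 / 2 + ε) * n ≤ G.degree v) (x : α) :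
    (#{S ∈ univ.powersetCard s | x ∈ S ∧
      ∃ v ∈ S, #((S.erase v).filter (G.Adj v)) ≤ ⌊(1 / 2 + ε / 2) * (s : ℝ)⌋₊} : ℝ) ≤
      2 / ε * exp (-(ε ^ 2 / 32 * s)) * s * (n - 1).choose (s - 1) := by
  have hs2 : 2 ≤ s := by
    have : (2 : ℝ) ≤ s := by nlinarith
    exact_mod_cast this
  have hn2 : 2 ≤ n := by
    have : (2 : ℝ) ≤ n := by nlinarith
    exact_mod_cast this
  set m := ⌊(1 / 2 + ε / 2) * (s : ℝ)⌋₊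
  set m' := ⌊(1 / 2 + 5 * ε / 8) * (s : ℝ)⌋₊
  have hmm' : m ≤ m' := Nat.floor_le_floor (by nlinarith)
  have hm' : (m' : ℝ) ≤ (1 / 2 + 5 * ε / 8) * s := Nat.floor_le (by positivity)
  have hpow : (1 - ε / 2) ^ (m' - m) ≤ exp (-(ε ^ 2 / 32 * s)) := by
    refine (one_sub_pow_le_exp_neg_mul (by linarith) _).trans (exp_le_exp.2 ?_)
    have := sub_sub_one_le_natFloor_sub_natFloor (p := (1 / 2 + ε / 2) * s)
      (q := (1 / 2 + 5 * ε / 8) * s) (by positivity) (by nlinarith)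
    nlinarith
  calc _ ≤ ∑ v, (#{T ∈ (univ \ {x, v}).powersetCard (s - #{x, v}) |
          #(T ∩ G.neighborFinset v) ≤ m} : ℝ) := by
        exact_mod_cast card_filter_exists_card_filter_adj_le G x s m
    _ ≤ ∑ v, 2 / ε * (1 - ε / 2) ^ (m' - m) * ((n - #{x, v}).choose (s - #{x, v}) : ℝ) :=
        sum_le_sum fun v _ => card_filter_card_inter_le_of_dense hε hε2 hn hs hmm' hm' hcard
          card_le_two (by rw [G.card_neighborFinset_eq_degree]; exact hdeg v)
    _ = 2 / ε * (1 - ε / 2) ^ (m' - m) * s * (n - 1).choose (s - 1) := by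
        rw [← mul_sum, ← Nat.cast_sum, ← hcard,
          sum_choose_card_sub_card_pair x hs2 (hcard ▸ hn2)]
        push_cast
        ring
    _ ≤ 2 / ε * exp (-(ε ^ 2 / 32 * s)) * s * (n - 1).choose (s - 1) := by gcongr

theorem le_card_filter_mem_and_forall_le_card_filter_adj (G : SimpleGraph α) [DecidableRel G.Adj]
    {ε : ℝ} {n s : ℕ} (hε : 0 < ε) (hs : 32 ≤ ε * s)
    (hdecay : 2 / ε * s * exp (-(ε ^ 2 / 32 * s)) ≤ exp (-√s)) (hn : 16 * (s + 2) ≤ ε * n)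
    (hcard : Fintype.card α = n) (hdeg : ∀ v, (1 / 2 + ε) * n ≤ G.degree v) (x : α) :
    (1 - exp (-√s)) * ((n - 1).choose (s - 1) : ℝ) ≤
      #{S ∈ univ.powersetCard s | x ∈ S ∧
        ∀ v ∈ S, (1 / 2 + ε / 2) * s ≤ (#((S.erase v).filter (G.Adj v)) : ℝ)} := by
  have hε2 : ε < 1 / 2 := by
    have : (G.degree x : ℝ) < n := by exact_mod_cast hcard ▸ G.degree_lt_card_verts x
    nlinarith [hdeg x]
  set P : Finset α → Prop :=
    fun S => ∀ v ∈ S, (1 / 2 + ε / 2) * s ≤ (#((S.erase v).filter (G.Adj v)) : ℝ)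
  have hsplit : (#{S ∈ univ.powersetCard s | x ∈ S ∧ P S} : ℝ) +
      #{S ∈ univ.powersetCard s | x ∈ S ∧ ¬P S} = (n - 1).choose (s - 1) := by
    have : 1 ≤ s := by
      have : (1 : ℝ) ≤ s := by nlinarith
      exact_mod_cast this
    exact_mod_cast hcard ▸ card_filter_mem_and_add_card_filter_mem_and_not P x this
  have hlow : #{S ∈ univ.powersetCard s | x ∈ S ∧ ¬P S} ≤
      #{S ∈ univ.powersetCard s | x ∈ S ∧
        ∃ v ∈ S, #((S.erase v).filter (G.Adj v)) ≤ ⌊(1 / 2 + ε / 2) * (s : ℝ)⌋₊} := by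
    refine card_le_card (monotone_filter_right _ fun S _ hS => ⟨hS.1, ?_⟩)
    obtain ⟨v, hv, hlt⟩ := by simpa only [P, not_forall, not_le, exists_prop] using hS.2
    exact ⟨v, hv, Nat.le_floor hlt.le⟩
  have hbad := card_filter_exists_card_filter_adj_le_of_dense G hε hε2 hs hn hcard hdeg x
  have hC : (0 : ℝ) ≤ (n - 1).choose (s - 1) := Nat.cast_nonneg _
  have hdecayC := mul_le_mul_of_nonneg_right hdecay hC
  linarith [(Nat.cast_le (α := ℝ)).2 hlow]

end

/-- Degree inheritance, Dirac form: for `ε ≫ 1/s ≫ 1/n` and any `n`-vertex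
graph `G` with `δ(G) ≥ (1/2+ε)n`, every vertex lies in at least `(1 − e^{−√s})·C(n−1,s−1)`
many `s`-sets `S` with `δ(G[S]) ≥ (1/2+ε/2)s`. -/
theorem stmt6 (ε : ℝ) (hε : 0 < ε) :
    ∃ s₀ : ℕ, ∀ s : ℕ, s₀ ≤ s → ∃ n₀ : ℕ, ∀ n : ℕ, n₀ ≤ n →
    ∀ (α : Type) [Fintype α] [DecidableEq α] (G : SimpleGraph α) [DecidableRel G.Adj],
      Fintype.card α = n →
      (∀ v : α, ((1:ℝ)/2 + ε) * n ≤ G.degree v) →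
      ∀ x : α,
      (1 - Real.exp (-Real.sqrt s)) * (((n - 1).choose (s - 1) : ℕ) : ℝ) ≤
        (((Finset.univ.powersetCard s).filter fun S : Finset α => x ∈ S ∧
          ∀ v ∈ S, ((1:ℝ)/2 + ε/2) * s ≤ (((S.erase v).filter (G.Adj v)).card : ℝ)).card : ℝ) := by
  have hεs := tendsto_natCast_atTop_atTop.const_mul_atTop hε
  obtain ⟨s₀, hs₀⟩ := Filter.eventually_atTop.1 ((hεs.eventually_ge_atTop 32).and
    (eventually_mul_mul_exp_neg_le_exp_neg_sqrt (C := 2 / ε) (c := ε ^ 2 / 32) (by positivity)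
      (by positivity)))
  refine ⟨s₀, fun s hs => ?_⟩
  obtain ⟨n₀, hn₀⟩ := Filter.eventually_atTop.1 (hεs.eventually_ge_atTop (16 * (s + 2)))
  exact ⟨n₀, fun n hn α _ _ G _ hcard hdeg x =>
    le_card_filter_mem_and_forall_le_card_filter_adj G hε (hs₀ s hs).1 (hs₀ s hs).2 (hn₀ n hn)
      hcard hdeg x⟩
end

section
/- Let s ≥ 2 and ε > 0 with n divisible by s, and n sufficiently large in terms of s and ε. Let P be an n-vertex s-uniform hypergraph with δ₁(P) ≥ (1 − 1/s + ε)·C(n−1, s−1). Then P contains a perfect matching. -/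
/-!
Write `s = k + 1` and take a maximum matching `M`. If it misses some vertex, it misses a set
`U₀ = {u₀, …, u_k}` of `s` vertices, and `M` extends to a partition of the other vertices into
`s`-sets (blocks). For a family `W` of `k` blocks, a transversal `t` of `W` gives a potential edge
`{u_i} ∪ t`; distinct `W` have disjoint sets of transversals, so the degree condition bounds the
number of missing such edges, summed over `i` and `W`, by less than `s ^ k` times the number of
`W`. Hence some `W` has fewer than `s ^ k` missing edges in total. Coordinatise every block of `W`
by `Fin s`: the `s` translates `a + i` of a vector `a : W → Fin s` are pairwise disjoint
transversals, and `a ↦ a + i` is a bijection, so a union bound gives an `a` for which all `s` edges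
`{u_i} ∪ (a + i)` are present. Swapping them for the at most `k` edges of `M` inside `W` enlarges
`M`.
-/

open Finset Function
open scoped Nat

theorem exists_forall_add_notMem {G ι : Type*} [AddGroup G] [Fintype G] [DecidableEq G]
    [Fintype ι] (c : ι → G) (bad : ι → Finset G) (h : ∑ i, #(bad i) < Fintype.card G) :
    ∃ a : G, ∀ i, a + c i ∉ bad i := by
  have hcard : #(univ.biUnion fun i => (bad i).image (· - c i)) < #(univ : Finset G) :=
    card_biUnion_le.trans_lt <| (sum_le_sum fun i _ => card_image_le).trans_lt h
  obtain ⟨a, -, ha⟩ := exists_mem_notMem_of_card_lt_card hcard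
  exact ⟨a, fun i hi => ha <| mem_biUnion.2
    ⟨i, mem_univ _, mem_image.2 ⟨_, hi, add_sub_cancel_right a (c i)⟩⟩⟩

section

variable {α : Type*} [DecidableEq α]

def transversals (W : Finset (Finset α)) : Finset (Finset α) :=
  {t ∈ (W.biUnion id).powersetCard #W | ∀ b ∈ W, (t ∩ b).Nonempty}

theorem mem_transversals {W : Finset (Finset α)} {t : Finset α} :
    t ∈ transversals W ↔ t ⊆ W.biUnion id ∧ #t = #W ∧ ∀ b ∈ W, (t ∩ b).Nonempty := by
  rw [transversals, mem_filter, mem_powersetCard, and_assoc]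

theorem exists_transversal_parametrization {m : ℕ} {W : Finset (Finset α)}
    (hW : (W : Set (Finset α)).PairwiseDisjoint id) (hWcard : ∀ b ∈ W, #b = m) :
    ∃ T : (W → Fin m) → Finset α, Injective T ∧ (∀ f, T f ∈ transversals W) ∧
      ∀ f g, (∀ b, f b ≠ g b) → Disjoint (T f) (T g) := by
  let x : W × Fin m → α := fun p => ((p.1 : Finset α).equivFinOfCardEq (hWcard _ p.1.2)).symm p.2
  have hx_mem (p : W × Fin m) : x p ∈ (p.1 : Finset α) := Subtype.prop _
  have hx_inj : Injective x := by
    rintro ⟨b, r⟩ ⟨b', r'⟩ hxx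
    obtain rfl : b = b' :=
      Subtype.ext <| hW.elim_finset b.2 b'.2 _ (hx_mem (b, r)) (hxx ▸ hx_mem (b', r'))
    simpa [x] using hxx
  let T : (W → Fin m) → Finset α := fun f => univ.image fun b => x (b, f b)
  have hx_mem_T {f g : W → Fin m} {b : W} (hb : x (b, f b) ∈ T g) : f b = g b := by
    obtain ⟨b', -, hb'⟩ := mem_image.1 hb
    obtain ⟨rfl, hfg⟩ := Prod.ext_iff.1 (hx_inj hb')
    exact hfg.symm
  refine ⟨T, fun f g hfg => funext fun b => hx_mem_T ?_, fun f => ?_, fun f g hfg => ?_⟩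
  · rw [← hfg]
    exact mem_image_of_mem _ (mem_univ b)
  · refine mem_transversals.2 ⟨?_, ?_, fun b hb => ?_⟩
    · simp only [T, image_subset_iff]
      exact fun b _ => mem_biUnion.2 ⟨b, b.2, hx_mem _⟩
    · rw [card_image_of_injective _ fun b b' h => (Prod.ext_iff.1 (hx_inj h)).1, card_univ,
        Fintype.card_coe]
    · have hxb : x (⟨b, hb⟩, f ⟨b, hb⟩) ∈ b := hx_mem _
      exact ⟨_, mem_inter.2 ⟨mem_image_of_mem _ (mem_univ _), hxb⟩⟩
  · refine disjoint_left.2 fun y hyf hyg => ?_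
    obtain ⟨b, -, rfl⟩ := mem_image.1 hyf
    exact hfg b (hx_mem_T hyg)

theorem exists_pairwise_disjoint_transversals {m : ℕ} [NeZero m] {W : Finset (Finset α)}
    (hW : (W : Set (Finset α)).PairwiseDisjoint id) (hWcard : ∀ b ∈ W, #b = m)
    (good : Fin m → Finset α → Prop) [∀ i, DecidablePred (good i)]
    (h : ∑ i, #{t ∈ transversals W | ¬ good i t} < m ^ #W) :
    ∃ t : Fin m → Finset α, (∀ i, t i ∈ transversals W ∧ good i (t i)) ∧
      Pairwise (Disjoint on t) := by
  obtain ⟨T, hT_inj, hT_mem, hT_disj⟩ := exists_transversal_parametrization hW hWcard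
  have hbad : ∑ i, #{f | ¬ good i (T f)} < Fintype.card (W → Fin m) := by
    refine (sum_le_sum fun i _ => card_le_card_of_injOn (t := {t ∈ transversals W | ¬ good i t})
      T ?_ hT_inj.injOn).trans_lt ?_
    · intro f hf
      simpa [hT_mem] using hf
    · simpa using h
  obtain ⟨a, ha⟩ := exists_forall_add_notMem (fun i _ => i) _ hbad
  exact ⟨fun i => T (a + fun _ => i), fun i => ⟨hT_mem _, by simpa using ha i⟩,
    fun i j hij => hT_disj _ _ fun b => by simpa using hij⟩

theorem subset_of_mem_transversals {B W W' : Finset (Finset α)}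
    (hB : (B : Set (Finset α)).PairwiseDisjoint id) (hW : W ⊆ B) (hW' : W' ⊆ B) {t : Finset α}
    (ht : t ∈ transversals W) (ht' : t ∈ transversals W') : W ⊆ W' := by
  intro b hb
  obtain ⟨y, hy⟩ := (mem_transversals.1 ht).2.2 b hb
  obtain ⟨b', hb', hyb'⟩ := mem_biUnion.1 ((mem_transversals.1 ht').1 (mem_inter.1 hy).1)
  rwa [hB.elim_finset (hW hb) (hW' hb') y (mem_inter.1 hy).2 hyb']

theorem sum_card_filter_transversals_le {B : Finset (Finset α)}
    (hB : (B : Set (Finset α)).PairwiseDisjoint id) (k : ℕ) (p : Finset α → Prop)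
    [DecidablePred p] :
    ∑ W ∈ B.powersetCard k, #{t ∈ transversals W | p t} ≤
      #{t ∈ (B.biUnion id).powersetCard k | p t} := by
  rw [← card_biUnion]
  · refine card_le_card fun t ht => ?_
    obtain ⟨W, hW, htW⟩ := mem_biUnion.1 ht
    obtain ⟨hWB, rfl⟩ := mem_powersetCard.1 hW
    obtain ⟨htW, hpt⟩ := mem_filter.1 htW
    obtain ⟨htW, htcard, -⟩ := mem_transversals.1 htW
    exact mem_filter.2
      ⟨mem_powersetCard.2 ⟨htW.trans (biUnion_subset_biUnion_of_subset_left _ hWB), htcard⟩, hpt⟩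
  · intro W hW W' hW' hne
    refine disjoint_left.2 fun t ht ht' => hne ?_
    have hWB := (mem_powersetCard.1 hW).1
    have hW'B := (mem_powersetCard.1 hW').1
    exact (subset_of_mem_transversals hB hWB hW'B (mem_filter.1 ht).1 (mem_filter.1 ht').1).antisymm
      (subset_of_mem_transversals hB hW'B hWB (mem_filter.1 ht').1 (mem_filter.1 ht).1)

theorem card_biUnion_id_of_card_eq {m : ℕ} {B : Finset (Finset α)}
    (hB : (B : Set (Finset α)).PairwiseDisjoint id) (hcard : ∀ b ∈ B, #b = m) :
    #(B.biUnion id) = #B * m := by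
  rw [card_biUnion hB]
  exact sum_const_nat hcard

theorem exists_pairwiseDisjoint_card_eq_biUnion_eq {m : ℕ} (T : Finset α) (h : m ∣ #T) :
    ∃ B : Finset (Finset α), (B : Set (Finset α)).PairwiseDisjoint id ∧ (∀ b ∈ B, #b = m) ∧
      B.biUnion id = T := by
  obtain ⟨q, hq⟩ := h
  let e : Fin q × Fin m ≃ T :=
    finProdFinEquiv.trans ((finCongr (by rw [hq, mul_comm])).trans T.equivFin.symm)
  have he_inj {p p' : Fin q × Fin m} (h : (e p : α) = e p') : p = p' := e.injective (Subtype.ext h)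
  let block (j : Fin q) : Finset α := univ.image fun r => (e (j, r) : α)
  refine ⟨univ.image block, ?_, ?_, ?_⟩
  · simp only [coe_image, coe_univ, Set.image_univ]
    rintro _ ⟨j, rfl⟩ _ ⟨j', rfl⟩ hne
    refine disjoint_left.2 fun y hy hy' => hne ?_
    obtain ⟨r, -, rfl⟩ := mem_image.1 hy
    obtain ⟨r', -, h⟩ := mem_image.1 hy'
    obtain ⟨rfl, -⟩ := Prod.ext_iff.1 (he_inj h)
    rfl
  · simp only [mem_image, mem_univ, true_and, forall_exists_index, forall_apply_eq_imp_iff]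
    intro j
    rw [card_image_of_injective _ fun r r' h => (Prod.ext_iff.1 (he_inj h)).2, card_univ,
      Fintype.card_fin]
  · ext y
    simp only [mem_biUnion, mem_image, mem_univ, true_and, id, exists_exists_eq_and, block]
    refine ⟨fun ⟨_, _, hy⟩ => hy ▸ (e _).2, fun hy => ⟨(e.symm ⟨y, hy⟩).1, (e.symm ⟨y, hy⟩).2, ?_⟩⟩
    simp

theorem exists_superset_pairwiseDisjoint_card_eq_biUnion_eq {m : ℕ} {M : Finset (Finset α)}
    (hM : (M : Set (Finset α)).PairwiseDisjoint id) (hMcard : ∀ e ∈ M, #e = m) {S : Finset α}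
    (hMS : M.biUnion id ⊆ S) (hdvd : m ∣ #S) :
    ∃ B : Finset (Finset α), M ⊆ B ∧ (B : Set (Finset α)).PairwiseDisjoint id ∧
      (∀ b ∈ B, #b = m) ∧ B.biUnion id = S := by
  have hdvd' : m ∣ #(S \ M.biUnion id) := by
    rw [card_sdiff_of_subset hMS, card_biUnion_id_of_card_eq hM hMcard]
    exact Nat.dvd_sub hdvd (dvd_mul_left m _)
  obtain ⟨B, hB, hBcard, hBS⟩ := exists_pairwiseDisjoint_card_eq_biUnion_eq _ hdvd'
  refine ⟨M ∪ B, subset_union_left, ?_, ?_, ?_⟩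
  · rw [coe_union]
    refine hM.union hB fun e he b hb _ => ?_
    have hbS : b ⊆ S \ M.biUnion id := hBS ▸ subset_biUnion_of_mem id hb
    exact disjoint_of_subset_right hbS (disjoint_sdiff.mono_left (subset_biUnion_of_mem id he))
  · simp only [mem_union]
    rintro b (hb | hb)
    exacts [hMcard b hb, hBcard b hb]
  · rw [union_biUnion, hBS, union_sdiff_of_subset hMS]

theorem card_filter_insert_notMem_add_card_filter_mem_le [Fintype α] {k : ℕ}
    {P : Finset (Finset α)} (hP : ∀ e ∈ P, #e = k + 1) (v : α) :
    #{t ∈ (univ.erase v).powersetCard k | insert v t ∉ P} + #{e ∈ P | v ∈ e} ≤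
      (Fintype.card α - 1).choose k := by
  have hlink : #{e ∈ P | v ∈ e} ≤ #{t ∈ (univ.erase v).powersetCard k | insert v t ∈ P} := by
    refine card_le_card_of_injOn (·.erase v) (fun e he => ?_) fun e he e' he' h => ?_
    · obtain ⟨heP, hve⟩ := mem_filter.1 he
      simp [card_erase_of_mem hve, hP e heP, insert_erase hve, heP, subset_iff]
    · rw [← insert_erase (mem_filter.1 he).2, ← insert_erase (mem_filter.1 he').2]
      exact congrArg (insert v) h
  have hsplit := card_filter_add_card_filter_not (s := (univ.erase v).powersetCard k)
    (fun t => insert v t ∈ P)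
  rw [card_powersetCard, card_erase_of_mem (mem_univ v), card_univ] at hsplit
  omega

theorem one_sub_mul_pow_lt_sub_pow {k : ℕ} {x ε : ℝ} (hx : k * (k + 1) ≤ x)
    (hε : (k : ℝ) ^ 2 < ε * x) : (1 - (k + 1) * ε) * x ^ k < (x - k * (k + 1)) ^ k := by
  have hxpos : 0 < x := (le_trans (by positivity) hx).lt_of_ne'
    (right_ne_zero_of_mul ((sq_nonneg _).trans_lt hε).ne')
  have hbernoulli : x ^ k + k * x ^ (k - 1) * (-(k * (k + 1))) ≤ (x - k * (k + 1)) ^ k :=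
    pow_add_mul_le_add_pow hxpos.le (by linarith) k
  have hpow : (k : ℝ) * x ^ (k - 1) * x = k * x ^ k := by
    rcases k with _ | k
    · simp
    · rw [Nat.add_sub_cancel, mul_assoc, ← pow_succ]
  have hgain : (k : ℝ) ^ 2 * (k + 1) * x ^ (k - 1) < (k + 1) * ε * x ^ k := by
    refine lt_of_mul_lt_mul_right ?_ hxpos.le
    have := mul_lt_mul_of_pos_right hε (by positivity : (0 : ℝ) < (k + 1) * x ^ k)
    linear_combination this + (k * (k + 1) : ℝ) * hpow
  linarith

theorem one_sub_mul_choose_lt_choose_mul_pow {k N n : ℕ} {ε : ℝ} (hkN : k ≤ N)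
    (hn : (k + 1) * (N + 1) = n) (hε : (k : ℝ) ^ 2 < ε * n) :
    (1 - (k + 1) * ε) * (n - 1).choose k < N.choose k * (k + 1) ^ k := by
  have hfac : (0 : ℝ) < k ! := mod_cast k.factorial_pos
  have hN : (0 : ℝ) < N.choose k := mod_cast Nat.choose_pos hkN
  rcases lt_or_ge (1 - (k + 1) * ε) 0 with hneg | hnonneg
  · exact (mul_nonpos_of_nonpos_of_nonneg hneg.le (Nat.cast_nonneg _)).trans_lt (by positivity)
  have hupper : (k ! * (n - 1).choose k : ℝ) ≤ (n : ℝ) ^ k := by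
    rw [← Nat.cast_mul, ← Nat.descFactorial_eq_factorial_mul_choose]
    exact_mod_cast (Nat.descFactorial_le_pow _ _).trans (Nat.pow_le_pow_left (n.sub_le 1) k)
  have hcast : ((n : ℝ) - k * (k + 1)) = (k + 1) * ((N + 1 - k : ℕ) : ℝ) := by
    rw [← hn, Nat.cast_sub (by omega)]; push_cast; ring
  have hlower : ((n : ℝ) - k * (k + 1)) ^ k ≤ k ! * N.choose k * (k + 1) ^ k := by
    have h := Nat.pow_sub_le_descFactorial N k
    rw [Nat.descFactorial_eq_factorial_mul_choose] at h
    rw [hcast, mul_pow, mul_comm]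
    gcongr
    exact_mod_cast h
  have hmid := one_sub_mul_pow_lt_sub_pow (sub_nonneg.1 (hcast ▸ by positivity)) hε
  refine lt_of_mul_lt_mul_left ?_ hfac.le
  calc (k ! : ℝ) * ((1 - (k + 1) * ε) * (n - 1).choose k)
      = (1 - (k + 1) * ε) * (k ! * (n - 1).choose k) := by ring
    _ ≤ (1 - (k + 1) * ε) * (n : ℝ) ^ k := mul_le_mul_of_nonneg_left hupper hnonneg
    _ < ((n : ℝ) - k * (k + 1)) ^ k := hmid
    _ ≤ k ! * (N.choose k * (k + 1) ^ k) := by linarith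

theorem exists_larger_matching_of_swap {k : ℕ} {P M B W : Finset (Finset α)} (hMP : M ⊆ P)
    (hB : (B : Set (Finset α)).PairwiseDisjoint id) (hMB : M ⊆ B) (hWB : W ⊆ B) (hWk : #W = k)
    {u : Fin (k + 1) → α} (hu : Injective u) (huB : ∀ i, u i ∉ B.biUnion id)
    {t : Fin (k + 1) → Finset α} (ht : ∀ i, t i ⊆ W.biUnion id) (htdisj : Pairwise (Disjoint on t))
    (htP : ∀ i, insert (u i) (t i) ∈ P) :
    ∃ M' ⊆ P, (M' : Set (Finset α)).PairwiseDisjoint id ∧ #M < #M' := by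
  let f i := insert (u i) (t i)
  have hu_notMem {e : Finset α} (he : e ∈ B) (i : Fin (k + 1)) : u i ∉ e :=
    fun h => huB i (mem_biUnion.2 ⟨e, he, h⟩)
  have hut (i j : Fin (k + 1)) : u i ∉ t j :=
    fun h => huB i (biUnion_subset_biUnion_of_subset_left _ hWB (ht j h))
  have hf_disj : Pairwise (Disjoint on f) := fun i j hij =>
    disjoint_insert_left.2 ⟨by rw [mem_insert, not_or]; exact ⟨hu.ne hij, hut i j⟩,
      disjoint_insert_right.2 ⟨hut j i, htdisj hij⟩⟩
  have hf_inj : Injective f := fun i j hij => by_contra fun hne => by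
    simpa [f, hij] using hf_disj hne
  have hMf {e : Finset α} (he : e ∈ M \ W) (i : Fin (k + 1)) : Disjoint e (f i) := by
    obtain ⟨heM, heW⟩ := mem_sdiff.1 he
    refine disjoint_insert_right.2 ⟨hu_notMem (hMB heM) i, disjoint_left.2 fun y hye hyt => ?_⟩
    obtain ⟨b, hbW, hyb⟩ := mem_biUnion.1 (ht i hyt)
    exact heW (hB.elim_finset (hMB heM) (hWB hbW) y hye hyb ▸ hbW)
  refine ⟨(M \ W) ∪ univ.image f, union_subset (sdiff_subset.trans hMP)
    (image_subset_iff.2 fun i _ => htP i), ?_, ?_⟩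
  · rw [coe_union]
    refine ((hB.subset hMB).subset (coe_subset.2 sdiff_subset)).union ?_ ?_
    · simp only [coe_image, coe_univ, Set.image_univ]
      rintro _ ⟨i, rfl⟩ _ ⟨j, rfl⟩ hne
      exact hf_disj (ne_of_apply_ne f hne)
    · simp only [coe_image, coe_univ, Set.image_univ]
      rintro e he _ ⟨i, rfl⟩ -
      exact hMf he i
  · have hdisj : Disjoint (M \ W) (univ.image f) := by
      refine disjoint_right.2 fun e he heM => ?_
      obtain ⟨i, -, rfl⟩ := mem_image.1 he
      exact hu_notMem (hMB (mem_sdiff.1 heM).1) i (mem_insert_self _ _)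
    rw [card_union_of_disjoint hdisj, card_image_of_injective _ hf_inj, card_univ,
      Fintype.card_fin]
    have := card_le_card_sdiff_add_card (s := M) (t := W)
    omega

theorem exists_good_window [Fintype α] {k : ℕ} {P B : Finset (Finset α)}
    (hB : (B : Set (Finset α)).PairwiseDisjoint id) (hBcard : ∀ b ∈ B, #b = k + 1)
    {u : Fin (k + 1) → α} (huB : ∀ i, u i ∉ B.biUnion id)
    (hlink : ∀ i, (k + 1) * #{t ∈ (univ.erase (u i)).powersetCard k | insert (u i) t ∉ P} <
      (#B).choose k * (k + 1) ^ k) :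
    ∃ W ⊆ B, #W = k ∧ ∃ t : Fin (k + 1) → Finset α,
      (∀ i, t i ∈ transversals W ∧ insert (u i) (t i) ∈ P) ∧ Pairwise (Disjoint on t) := by
  have hlink' (i : Fin (k + 1)) :
      ∑ W ∈ B.powersetCard k, #{t ∈ transversals W | insert (u i) t ∉ P} ≤
        #{t ∈ (univ.erase (u i)).powersetCard k | insert (u i) t ∉ P} :=
    (sum_card_filter_transversals_le hB k _).trans <| card_le_card <| filter_subset_filter _ <|
      powersetCard_mono <| subset_erase.2 ⟨subset_univ _, huB i⟩
  have hwindows : ∑ W ∈ B.powersetCard k, ∑ i, #{t ∈ transversals W | insert (u i) t ∉ P} <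
      ∑ W ∈ B.powersetCard k, (k + 1) ^ k := by
    rw [sum_comm, sum_const, card_powersetCard, smul_eq_mul]
    refine Nat.lt_of_mul_lt_mul_left (a := k + 1) ?_
    calc (k + 1) * ∑ i, ∑ W ∈ B.powersetCard k, #{t ∈ transversals W | insert (u i) t ∉ P}
        ≤ ∑ i, (k + 1) * #{t ∈ (univ.erase (u i)).powersetCard k | insert (u i) t ∉ P} := by
          rw [mul_sum]
          gcongr with i
          exact hlink' i
      _ < ∑ _i : Fin (k + 1), (#B).choose k * (k + 1) ^ k :=
          sum_lt_sum_of_nonempty univ_nonempty fun i _ => hlink i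
      _ = (k + 1) * ((#B).choose k * (k + 1) ^ k) := by simp
  obtain ⟨W, hW, hWgood⟩ := exists_lt_of_sum_lt hwindows
  obtain ⟨hWB, hWk⟩ := mem_powersetCard.1 hW
  exact ⟨W, hWB, hWk, exists_pairwise_disjoint_transversals (hB.subset (coe_subset.2 hWB))
    (fun b hb => hBcard b (hWB hb)) (fun i t => insert (u i) t ∈ P) (by rwa [hWk])⟩

theorem exists_larger_matching_of_biUnion_ne_univ [Fintype α] {k N : ℕ}
    {P M : Finset (Finset α)} (hP : ∀ e ∈ P, #e = k + 1) (hN : (k + 1) * (N + 1) = Fintype.card α)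
    (hlink : ∀ v, (k + 1) * #{t ∈ (univ.erase v).powersetCard k | insert v t ∉ P} <
      N.choose k * (k + 1) ^ k)
    (hMP : M ⊆ P) (hM : (M : Set (Finset α)).PairwiseDisjoint id) (hcov : M.biUnion id ≠ univ) :
    ∃ M' ⊆ P, (M' : Set (Finset α)).PairwiseDisjoint id ∧ #M < #M' := by
  have hMcard (e : Finset α) (he : e ∈ M) : #e = k + 1 := hP e (hMP he)
  have hdvd : k + 1 ∣ Fintype.card α := ⟨N + 1, hN.symm⟩
  obtain ⟨U₀, hU₀, hU₀card⟩ : ∃ U₀ ⊆ univ \ M.biUnion id, #U₀ = k + 1 := by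
    refine exists_subset_card_eq (Nat.le_of_dvd (card_pos.2 ?_) ?_)
    · exact sdiff_nonempty.2 fun h => hcov (univ_subset_iff.1 h)
    · rw [card_sdiff_of_subset (subset_univ _), card_univ, card_biUnion_id_of_card_eq hM hMcard]
      exact Nat.dvd_sub hdvd (dvd_mul_left _ _)
  have hMU₀ : M.biUnion id ⊆ univ \ U₀ := fun x hx =>
    mem_sdiff.2 ⟨mem_univ x, fun h => (mem_sdiff.1 (hU₀ h)).2 hx⟩
  obtain ⟨B, hMB, hB, hBcard, hBU₀⟩ := exists_superset_pairwiseDisjoint_card_eq_biUnion_eq hM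
    hMcard hMU₀ (by rw [card_sdiff_of_subset (subset_univ _), card_univ, hU₀card]
                    exact Nat.dvd_sub hdvd dvd_rfl)
  have hBsize : #B = N := by
    have h := card_biUnion_id_of_card_eq hB hBcard
    rw [hBU₀, card_sdiff_of_subset (subset_univ _), card_univ, hU₀card, ← hN, mul_add_one,
      Nat.add_sub_cancel, mul_comm] at h
    exact (Nat.eq_of_mul_eq_mul_right k.succ_pos h).symm
  let u : Fin (k + 1) → α := fun i => (U₀.equivFinOfCardEq hU₀card).symm i
  have hu : Injective u := Subtype.val_injective.comp (Equiv.injective _)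
  have huB (i : Fin (k + 1)) : u i ∉ B.biUnion id := by
    rw [hBU₀, mem_sdiff, not_and, not_not]
    exact fun _ => Subtype.prop _
  obtain ⟨W, hWB, hWk, t, ht, htdisj⟩ :=
    exists_good_window hB hBcard huB fun i => hBsize ▸ hlink (u i)
  exact exists_larger_matching_of_swap hMP hB hMB hWB hWk hu huB
    (fun i => (mem_transversals.1 (ht i).1).1) htdisj fun i => (ht i).2

theorem mul_card_filter_insert_notMem_lt [Fintype α] {k N : ℕ} {ε : ℝ} {P : Finset (Finset α)}
    (hP : ∀ e ∈ P, #e = k + 1) (hkN : k ≤ N) (hN : (k + 1) * (N + 1) = Fintype.card α)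
    (hε : (k : ℝ) ^ 2 < ε * Fintype.card α) {v : α}
    (hv : (1 - 1 / ((k : ℝ) + 1) + ε) * ((Fintype.card α - 1).choose k : ℝ) ≤ #{e ∈ P | v ∈ e}) :
    (k + 1) * #{t ∈ (univ.erase v).powersetCard k | insert v t ∉ P} < N.choose k * (k + 1) ^ k := by
  have hsplit : ((#{t ∈ (univ.erase v).powersetCard k | insert v t ∉ P} + #{e ∈ P | v ∈ e} : ℕ)
      : ℝ) ≤ ((Fintype.card α - 1).choose k : ℕ) :=
    mod_cast card_filter_insert_notMem_add_card_filter_mem_le hP v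
  have hbound := one_sub_mul_choose_lt_choose_mul_pow hkN hN hε
  have hv' : ((k : ℝ) + (k + 1) * ε) * ((Fintype.card α - 1).choose k : ℝ) ≤
      (k + 1) * #{e ∈ P | v ∈ e} := by
    have hk : (k : ℝ) + 1 ≠ 0 := by positivity
    calc _ = ((k : ℝ) + 1) *
          ((1 - 1 / ((k : ℝ) + 1) + ε) * ((Fintype.card α - 1).choose k : ℝ)) := by
          field_simp; ring
      _ ≤ _ := mul_le_mul_of_nonneg_left hv (by positivity)
  push_cast at hsplit hbound ⊢
  exact_mod_cast (show ((k : ℝ) + 1) * #{t ∈ (univ.erase v).powersetCard k | insert v t ∉ P} <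
    (N.choose k : ℝ) * ((k : ℝ) + 1) ^ k by
      linarith [mul_le_mul_of_nonneg_left hsplit (by positivity : (0 : ℝ) ≤ k + 1)])

end

/-- Daykin–Häggkvist: for `s ≥ 2`, `ε > 0` and `n` large and divisible by `s`,
every `n`-vertex `s`-uniform hypergraph `P` with `δ₁(P) ≥ (1 − 1/s + ε)·C(n−1,s−1)` has a
perfect matching. -/
theorem stmt8 (s : ℕ) (hs : 2 ≤ s) (ε : ℝ) (hε : 0 < ε) :
    ∃ n₀ : ℕ, ∀ n : ℕ, n₀ ≤ n → s ∣ n →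
    ∀ (α : Type) [Fintype α] [DecidableEq α], Fintype.card α = n →
    ∀ P : Finset (Finset α), (∀ e ∈ P, e.card = s) →
    (∀ v : α, (1 - 1/(s:ℝ) + ε) * (((n - 1).choose (s - 1) : ℕ) : ℝ) ≤
        ((P.filter fun e => v ∈ e).card : ℝ)) →
    ∃ M ⊆ P, (∀ e ∈ M, ∀ f ∈ M, e ≠ f → Disjoint e f) ∧ M.biUnion id = Finset.univ := by
  obtain ⟨k, rfl⟩ : ∃ k, s = k + 1 := ⟨s - 1, by omega⟩
  refine ⟨(k + 1) ^ 2 + ⌈(k : ℝ) ^ 2 / ε⌉₊ + 1, fun n hn hdvd α _ _ hcard P hP hdeg => ?_⟩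
  subst hcard
  obtain ⟨N, hN⟩ : ∃ N, (k + 1) * (N + 1) = Fintype.card α := by
    obtain ⟨q, hq⟩ := hdvd
    exact ⟨q - 1, by rcases q with _ | q <;> simp_all⟩
  have hkN : k ≤ N := by nlinarith
  have hεn : (k : ℝ) ^ 2 < ε * Fintype.card α := by
    rw [← div_lt_iff₀' hε]
    exact (Nat.le_ceil _).trans_lt (Nat.cast_lt.2 (by omega))
  push_cast [Nat.add_sub_cancel] at hdeg
  classical
  obtain ⟨M, hM, hmax⟩ := exists_max_image
    (P.powerset.filter fun M : Finset (Finset α) => (M : Set (Finset α)).PairwiseDisjoint id)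
    card ⟨∅, by simp⟩
  obtain ⟨hMP, hMdisj⟩ := mem_filter.1 hM
  refine ⟨M, mem_powerset.1 hMP, hMdisj, ?_⟩
  by_contra hcov
  obtain ⟨M', hM'P, hM'disj, hlt⟩ := exists_larger_matching_of_biUnion_ne_univ hP hN
    (fun v => mul_card_filter_insert_notMem_lt hP hkN hN hεn (hdeg v)) (mem_powerset.1 hMP)
    hMdisj hcov
  exact (hmax M' (mem_filter.2 ⟨mem_powerset.2 hM'P, hM'disj⟩)).not_gt hlt
end

section
/- Let P be an s-partite s-uniform hypergraph with parts V₁, ..., V_s, each of size m, and suppose e(P) ≥ d·m^s for some d > 0. Then for every ρ > 0 with suitable hierarchy 1/s, d, ρ ≫ 1/m, P contains disjoint subsets W₁ ⊆ V₁, ..., W_s ⊆ V_s, all of the same size m₁ ≥ exp(−ρ^{−2s})·m, such that the tuple (W₁, ..., W_s) is (ρ, d)-lower-regular: for all X₁ ⊆ W₁, ..., X_s ⊆ W_s with |X_i| ≥ ρ·m₁ for each i, the density d_P(X₁,...,X_s) = e_P(X₁,...,X_s)/(|X₁|⋯|X_s|) is at least d − ρ. -/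
open Finset

/-- choose an `r`-subset whose (relative) weight is at least the average -/
lemma select_hi {β : Type} [DecidableEq β] (w : β → ℕ) :
    ∀ (j : ℕ) (A : Finset β) (r : ℕ), r + j = A.card →
    ∃ Y ⊆ A, Y.card = r ∧ (∑ v ∈ A, w v) * r ≤ (∑ v ∈ Y, w v) * A.card := by
  intro j
  induction j with
  | zero =>
    intro A r hr
    exact ⟨A, Finset.Subset.refl A, by omega, by rw [show r = A.card by omega]⟩
  | succ j ih =>
    intro A r hr
    have hA : A.Nonempty := Finset.card_pos.1 (by omega)
    obtain ⟨a, ha, hmin⟩ := A.exists_min_image w hA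
    have hsum : A.card * w a ≤ ∑ v ∈ A, w v := by
      simpa [smul_eq_mul] using Finset.card_nsmul_le_sum A w (w a) hmin
    have hcard' : r + j = (A.erase a).card := by
      rw [Finset.card_erase_of_mem ha]; omega
    obtain ⟨Y, hYA, hYcard, hY⟩ := ih (A.erase a) r hcard'
    refine ⟨Y, hYA.trans (Finset.erase_subset a A), hYcard, ?_⟩
    have he1 : (∑ v ∈ A.erase a, w v) + w a = ∑ v ∈ A, w v :=
      Finset.sum_erase_add A w ha
    -- A.card * ∑_A ≤ A.card * ∑_{A'} + ∑_A
    have h2 : (r + j) * (∑ v ∈ A, w v) ≤ (r + j + 1) * (∑ v ∈ A.erase a, w v) := by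
      have : A.card * (∑ v ∈ A, w v) ≤ A.card * (∑ v ∈ A.erase a, w v) + ∑ v ∈ A, w v := by
        calc A.card * (∑ v ∈ A, w v) = A.card * ((∑ v ∈ A.erase a, w v) + w a) := by rw [he1]
        _ = A.card * (∑ v ∈ A.erase a, w v) + A.card * w a := by ring
        _ ≤ A.card * (∑ v ∈ A.erase a, w v) + ∑ v ∈ A, w v := by omega
      rw [← hr] at this
      -- (r+j+1) * ΣA ≤ (r+j+1) * ΣA' + ΣA  ⇒ (r+j) ΣA ≤ (r+j+1) ΣA'
      nlinarith [this]
    rcases Nat.eq_zero_or_pos (r + j) with h0 | hpos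
    · have : r = 0 := by omega
      simp [this]
    · -- multiply hY by (r+j+1) and h2 by r, cancel (r+j)
      have h3 : (∑ v ∈ A.erase a, w v) * r ≤ (∑ v ∈ Y, w v) * (r + j) := by
        rw [← hcard'] at hY; exact hY
      have h4 : (r + j) * ((∑ v ∈ A, w v) * r) ≤ (r + j) * ((∑ v ∈ Y, w v) * A.card) := by
        calc (r + j) * ((∑ v ∈ A, w v) * r)
            = ((r + j) * (∑ v ∈ A, w v)) * r := by ring
          _ ≤ ((r + j + 1) * (∑ v ∈ A.erase a, w v)) * r := Nat.mul_le_mul_right _ h2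
          _ = (r + j + 1) * ((∑ v ∈ A.erase a, w v) * r) := by ring
          _ ≤ (r + j + 1) * ((∑ v ∈ Y, w v) * (r + j)) := Nat.mul_le_mul_left _ h3
          _ = (r + j) * ((∑ v ∈ Y, w v) * A.card) := by rw [← hr]; ring
      exact Nat.le_of_mul_le_mul_left h4 hpos

/-- choose an `r`-subset whose (relative) weight is at most the average -/
lemma select_lo {β : Type} [DecidableEq β] (w : β → ℕ) :
    ∀ (j : ℕ) (A : Finset β) (r : ℕ), r + j = A.card →
    ∃ Y ⊆ A, Y.card = r ∧ (∑ v ∈ Y, w v) * A.card ≤ (∑ v ∈ A, w v) * r := by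
  intro j
  induction j with
  | zero =>
    intro A r hr
    exact ⟨A, Finset.Subset.refl A, by omega, by rw [show r = A.card by omega]⟩
  | succ j ih =>
    intro A r hr
    have hA : A.Nonempty := Finset.card_pos.1 (by omega)
    obtain ⟨a, ha, hmax⟩ := A.exists_max_image w hA
    have hsum : ∑ v ∈ A, w v ≤ A.card * w a := by
      simpa [smul_eq_mul] using Finset.sum_le_card_nsmul A w (w a) hmax
    have hcard' : r + j = (A.erase a).card := by
      rw [Finset.card_erase_of_mem ha]; omega
    obtain ⟨Y, hYA, hYcard, hY⟩ := ih (A.erase a) r hcard'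
    refine ⟨Y, hYA.trans (Finset.erase_subset a A), hYcard, ?_⟩
    have he1 : (∑ v ∈ A.erase a, w v) + w a = ∑ v ∈ A, w v :=
      Finset.sum_erase_add A w ha
    have h2 : (r + j + 1) * (∑ v ∈ A.erase a, w v) ≤ (r + j) * (∑ v ∈ A, w v) := by
      have : A.card * (∑ v ∈ A.erase a, w v) + ∑ v ∈ A, w v ≤ A.card * (∑ v ∈ A, w v) := by
        calc A.card * (∑ v ∈ A.erase a, w v) + ∑ v ∈ A, w v
            ≤ A.card * (∑ v ∈ A.erase a, w v) + A.card * w a := by omega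
          _ = A.card * ((∑ v ∈ A.erase a, w v) + w a) := by ring
          _ = A.card * (∑ v ∈ A, w v) := by rw [he1]
      rw [← hr] at this
      nlinarith [this]
    rcases Nat.eq_zero_or_pos (r + j) with h0 | hpos
    · have hr0 : r = 0 := by omega
      have hY0 : Y = ∅ := Finset.card_eq_zero.1 (by omega)
      simp [hr0, hY0]
    · have h3 : (∑ v ∈ Y, w v) * (r + j) ≤ (∑ v ∈ A.erase a, w v) * r := by
        rw [← hcard'] at hY; exact hY
      have h4 : (r + j) * ((∑ v ∈ Y, w v) * A.card) ≤ (r + j) * ((∑ v ∈ A, w v) * r) := by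
        calc (r + j) * ((∑ v ∈ Y, w v) * A.card)
            = ((∑ v ∈ Y, w v) * (r + j)) * A.card := by ring
          _ ≤ ((∑ v ∈ A.erase a, w v) * r) * A.card := Nat.mul_le_mul_right _ h3
          _ = ((r + j + 1) * (∑ v ∈ A.erase a, w v)) * r := by rw [← hr]; ring
          _ ≤ ((r + j) * (∑ v ∈ A, w v)) * r := Nat.mul_le_mul_right _ h2
          _ = (r + j) * ((∑ v ∈ A, w v) * r) := by ring
      exact Nat.le_of_mul_le_mul_left h4 hpos


open Finset

section
variable {s : ℕ} {α : Type} [DecidableEq α]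

/-- number of edges of `P` inside the box `W` -/
def cardE (P : Finset (Fin s → α)) (W : Fin s → Finset α) : ℕ :=
  (P.filter fun e => ∀ i, e i ∈ W i).card

lemma cardE_update_eq_sum (P : Finset (Fin s → α)) (W : Fin s → Finset α)
    (i : Fin s) (Y : Finset α) :
    cardE P (Function.update W i Y)
      = ∑ v ∈ Y, (P.filter fun e => e i = v ∧ ∀ j, j ≠ i → e j ∈ W j).card := by
  unfold cardE
  rw [Finset.card_eq_sum_card_fiberwise (f := fun e => e i) (t := Y)
    (by intro e he
        have := (Finset.mem_filter.1 he).2 i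
        simpa [Function.update_self] using this)]
  refine Finset.sum_congr rfl ?_
  intro v hv
  rw [Finset.filter_filter]
  congr 1
  apply Finset.filter_congr
  intro e _
  constructor
  · rintro ⟨hall, hei⟩
    refine ⟨hei, fun j hj => ?_⟩
    have := hall j
    rwa [Function.update_of_ne hj] at this
  · rintro ⟨hei, hother⟩
    refine ⟨fun j => ?_, hei⟩
    rcases eq_or_ne j i with rfl | hj
    · rw [Function.update_self, hei]; exact hv
    · rw [Function.update_of_ne hj]; exact hother j hj

lemma cardE_eq_sum (P : Finset (Fin s → α)) (W : Fin s → Finset α) (i : Fin s) :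
    cardE P W
      = ∑ v ∈ W i, (P.filter fun e => e i = v ∧ ∀ j, j ≠ i → e j ∈ W j).card := by
  conv_lhs => rw [show W = Function.update W i (W i) by rw [Function.update_eq_self]]
  rw [cardE_update_eq_sum]

/-- shrink one coordinate, keeping density at least as large -/
lemma shrink_coord_hi (P : Finset (Fin s → α)) (W : Fin s → Finset α) (i : Fin s)
    (r : ℕ) (hr : r ≤ (W i).card) :
    ∃ Y ⊆ W i, Y.card = r ∧
      cardE P W * r ≤ cardE P (Function.update W i Y) * (W i).card := by
  obtain ⟨Y, hYW, hYcard, hY⟩ :=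
    select_hi (fun v => (P.filter fun e => e i = v ∧ ∀ j, j ≠ i → e j ∈ W j).card)
      ((W i).card - r) (W i) r (by omega)
  refine ⟨Y, hYW, hYcard, ?_⟩
  rw [cardE_update_eq_sum, cardE_eq_sum P W i]
  exact hY

lemma shrink_coord_lo (P : Finset (Fin s → α)) (W : Fin s → Finset α) (i : Fin s)
    (r : ℕ) (hr : r ≤ (W i).card) :
    ∃ Y ⊆ W i, Y.card = r ∧
      cardE P (Function.update W i Y) * (W i).card ≤ cardE P W * r := by
  obtain ⟨Y, hYW, hYcard, hY⟩ :=
    select_lo (fun v => (P.filter fun e => e i = v ∧ ∀ j, j ≠ i → e j ∈ W j).card)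
      ((W i).card - r) (W i) r (by omega)
  refine ⟨Y, hYW, hYcard, ?_⟩
  rw [cardE_update_eq_sum, cardE_eq_sum P W i]
  exact hY

end

section
variable {s : ℕ} {α : Type} [DecidableEq α]

lemma cardE_le_vol (P : Finset (Fin s → α)) (W : Fin s → Finset α) :
    cardE P W ≤ ∏ i, (W i).card := by
  rw [← Fintype.card_piFinset]
  apply Finset.card_le_card
  intro e he
  rw [Fintype.mem_piFinset]
  exact (Finset.mem_filter.1 he).2

lemma shrink_many_hi (P : Finset (Fin s → α)) (T : Finset (Fin s)) :
    ∀ (W : Fin s → Finset α) (t₀ : ℕ), (∀ i ∈ T, t₀ ≤ (W i).card) →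
    ∃ W', (∀ i, W' i ⊆ W i) ∧ (∀ i ∈ T, (W' i).card = t₀) ∧ (∀ i ∉ T, W' i = W i) ∧
      cardE P W * t₀ ^ T.card ≤ cardE P W' * ∏ i ∈ T, (W i).card := by
  induction T using Finset.induction_on with
  | empty =>
    intro W t₀ _
    exact ⟨W, fun i => Finset.Subset.refl _, by simp, by simp, by simp⟩
  | @insert i T hiT ih =>
    intro W t₀ hle
    obtain ⟨Y, hYW, hYcard, hY⟩ :=
      shrink_coord_hi P W i t₀ (hle i (Finset.mem_insert_self i T))
    set W₁ := Function.update W i Y with hW₁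
    have hW₁sub : ∀ j, W₁ j ⊆ W j := by
      intro j
      rcases eq_or_ne j i with rfl | hj
      · rw [hW₁, Function.update_self]; exact hYW
      · rw [hW₁, Function.update_of_ne hj]
    have hW₁T : ∀ j ∈ T, (W₁ j).card = (W j).card := by
      intro j hj
      have : j ≠ i := by rintro rfl; exact hiT hj
      rw [hW₁, Function.update_of_ne this]
    obtain ⟨W₂, hW₂sub, hW₂T, hW₂out, hW₂⟩ := ih W₁ t₀
      (fun j hj => by rw [hW₁T j hj]; exact hle j (Finset.mem_insert_of_mem hj))
    refine ⟨W₂, fun j => (hW₂sub j).trans (hW₁sub j), ?_, ?_, ?_⟩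
    · intro j hj
      rcases Finset.mem_insert.1 hj with rfl | hj'
      · rw [hW₂out j hiT, hW₁, Function.update_self, hYcard]
      · exact hW₂T j hj'
    · intro j hj
      have hj1 : j ∉ T := fun h => hj (Finset.mem_insert_of_mem h)
      have hj2 : j ≠ i := by rintro rfl; exact hj (Finset.mem_insert_self _ T)
      rw [hW₂out j hj1, hW₁, Function.update_of_ne hj2]
    · have hprodT : ∏ j ∈ T, (W₁ j).card = ∏ j ∈ T, (W j).card :=
        Finset.prod_congr rfl hW₁T
      rw [Finset.card_insert_of_notMem hiT, Finset.prod_insert hiT]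
      calc cardE P W * t₀ ^ (T.card + 1)
          = (cardE P W * t₀) * t₀ ^ T.card := by ring
        _ ≤ (cardE P W₁ * (W i).card) * t₀ ^ T.card := Nat.mul_le_mul_right _ hY
        _ = (cardE P W₁ * t₀ ^ T.card) * (W i).card := by ring
        _ ≤ (cardE P W₂ * ∏ j ∈ T, (W₁ j).card) * (W i).card :=
            Nat.mul_le_mul_right _ hW₂
        _ = cardE P W₂ * ((W i).card * ∏ j ∈ T, (W j).card) := by rw [hprodT]; ring

lemma shrink_many_lo (P : Finset (Fin s → α)) (T : Finset (Fin s)) :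
    ∀ (W : Fin s → Finset α) (t₀ : ℕ), (∀ i ∈ T, t₀ ≤ (W i).card) →
    ∃ W', (∀ i, W' i ⊆ W i) ∧ (∀ i ∈ T, (W' i).card = t₀) ∧ (∀ i ∉ T, W' i = W i) ∧
      cardE P W' * ∏ i ∈ T, (W i).card ≤ cardE P W * t₀ ^ T.card := by
  induction T using Finset.induction_on with
  | empty =>
    intro W t₀ _
    exact ⟨W, fun i => Finset.Subset.refl _, by simp, by simp, by simp⟩
  | @insert i T hiT ih =>
    intro W t₀ hle
    obtain ⟨Y, hYW, hYcard, hY⟩ :=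
      shrink_coord_lo P W i t₀ (hle i (Finset.mem_insert_self i T))
    set W₁ := Function.update W i Y with hW₁
    have hW₁sub : ∀ j, W₁ j ⊆ W j := by
      intro j
      rcases eq_or_ne j i with rfl | hj
      · rw [hW₁, Function.update_self]; exact hYW
      · rw [hW₁, Function.update_of_ne hj]
    have hW₁T : ∀ j ∈ T, (W₁ j).card = (W j).card := by
      intro j hj
      have : j ≠ i := by rintro rfl; exact hiT hj
      rw [hW₁, Function.update_of_ne this]
    obtain ⟨W₂, hW₂sub, hW₂T, hW₂out, hW₂⟩ := ih W₁ t₀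
      (fun j hj => by rw [hW₁T j hj]; exact hle j (Finset.mem_insert_of_mem hj))
    refine ⟨W₂, fun j => (hW₂sub j).trans (hW₁sub j), ?_, ?_, ?_⟩
    · intro j hj
      rcases Finset.mem_insert.1 hj with rfl | hj'
      · rw [hW₂out j hiT, hW₁, Function.update_self, hYcard]
      · exact hW₂T j hj'
    · intro j hj
      have hj1 : j ∉ T := fun h => hj (Finset.mem_insert_of_mem h)
      have hj2 : j ≠ i := by rintro rfl; exact hj (Finset.mem_insert_self _ T)
      rw [hW₂out j hj1, hW₁, Function.update_of_ne hj2]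
    · have hprodT : ∏ j ∈ T, (W₁ j).card = ∏ j ∈ T, (W j).card :=
        Finset.prod_congr rfl hW₁T
      rw [Finset.card_insert_of_notMem hiT, Finset.prod_insert hiT]
      calc cardE P W₂ * ((W i).card * ∏ j ∈ T, (W j).card)
          = (cardE P W₂ * ∏ j ∈ T, (W₁ j).card) * (W i).card := by rw [hprodT]; ring
        _ ≤ (cardE P W₁ * t₀ ^ T.card) * (W i).card := Nat.mul_le_mul_right _ hW₂
        _ = (cardE P W₁ * (W i).card) * t₀ ^ T.card := by ring
        _ ≤ (cardE P W * t₀) * t₀ ^ T.card := Nat.mul_le_mul_right _ hY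
        _ = cardE P W * t₀ ^ (T.card + 1) := by ring

end

section
variable {s : ℕ} {α : Type} [DecidableEq α]

lemma sum_partition (P : Finset (Fin s → α)) (W X : Fin s → Finset α)
    (hX : ∀ i, X i ⊆ W i) :
    ∑ S ∈ (Finset.univ : Finset (Fin s)).powerset,
        cardE P (fun i => if i ∈ S then X i else W i \ X i) = cardE P W := by
  unfold cardE
  rw [Finset.card_eq_sum_card_fiberwise
    (f := fun e => Finset.univ.filter (fun i => e i ∈ X i))
    (t := (Finset.univ : Finset (Fin s)).powerset)
    (by intro e _; exact Finset.mem_powerset.2 (Finset.subset_univ _))]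
  refine Finset.sum_congr rfl ?_
  intro S hS
  rw [Finset.filter_filter]
  congr 1
  apply Finset.filter_congr
  intro e _
  constructor
  · intro hB
    constructor
    · intro i
      by_cases hiS : i ∈ S
      · exact hX i (by simpa [if_pos hiS] using hB i)
      · exact (Finset.mem_sdiff.1 (by simpa [if_neg hiS] using hB i)).1
    · ext i
      simp only [Finset.mem_filter, Finset.mem_univ, true_and]
      constructor
      · intro hXi
        by_contra hiS
        exact (Finset.mem_sdiff.1 (by simpa [if_neg hiS] using hB i)).2 hXi
      · intro hiS
        simpa [if_pos hiS] using hB i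
  · rintro ⟨hW, hfib⟩
    intro i
    show e i ∈ (if i ∈ S then X i else W i \ X i)
    by_cases hiS : i ∈ S
    · rw [if_pos hiS]
      have : i ∈ Finset.univ.filter (fun i => e i ∈ X i) := hfib ▸ hiS
      exact (Finset.mem_filter.1 this).2
    · rw [if_neg hiS]
      refine Finset.mem_sdiff.2 ⟨hW i, fun hXi => ?_⟩
      exact hiS (hfib ▸ (Finset.mem_filter.2 ⟨Finset.mem_univ i, hXi⟩))
end

section
variable {s : ℕ} {α : Type} [DecidableEq α]

lemma sum_vol_partition (W X : Fin s → Finset α) (hX : ∀ i, X i ⊆ W i)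
    {t r : ℕ} (hWt : ∀ i, (W i).card = t) (hXr : ∀ i, (X i).card = r) :
    ∑ S ∈ (Finset.univ : Finset (Fin s)).powerset,
        ∏ i, ((fun i => if i ∈ S then X i else W i \ X i) i).card = t ^ s := by
  have hsd : ∀ i, (W i \ X i).card = t - r := by
    intro i
    rw [Finset.card_sdiff_of_subset (hX i), hWt i, hXr i]
  have hrt : ∀ i : Fin s, r ≤ t := fun i => by
    rw [← hWt i, ← hXr i]; exact Finset.card_le_card (hX i)
  have key : ∀ S ∈ (Finset.univ : Finset (Fin s)).powerset,
      (∏ i, ((fun i => if i ∈ S then X i else W i \ X i) i).card)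
        = (∏ i ∈ S, r) * ∏ i ∈ Finset.univ \ S, (t - r) := by
    intro S hS
    have : ∀ i : Fin s, ((fun i => if i ∈ S then X i else W i \ X i) i).card
        = if i ∈ S then r else t - r := by
      intro i
      by_cases hiS : i ∈ S <;> simp [hiS, hXr i, hsd i]
    rw [Finset.prod_congr rfl (fun i _ => this i), Finset.prod_ite]
    congr 1
    · apply Finset.prod_congr _ (fun _ _ => rfl)
      ext i; simp
    · apply Finset.prod_congr _ (fun _ _ => rfl)
      ext i; simp [Finset.mem_sdiff]
  rw [Finset.sum_congr rfl key, ← Finset.prod_add (fun _ => r) (fun _ => t - r) Finset.univ]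
  rcases Nat.eq_zero_or_pos s with hs0 | hs0
  · subst hs0; simp
  · have hrt' : r ≤ t := hrt ⟨0, hs0⟩
    have heq : ∀ i : Fin s, r + (t - r) = t := fun i => by omega
    rw [Finset.prod_congr rfl (fun i _ => heq i)]
    simp [Finset.prod_const]

lemma stmt9_increment (P : Finset (Fin s → α)) (d ρ : ℝ) (hρ : 0 < ρ) (hs1 : 1 ≤ s)
    {t r : ℕ} (W X : Fin s → Finset α) (hWt : ∀ i, (W i).card = t)
    (hXW : ∀ i, X i ⊆ W i) (hXr : ∀ i, (X i).card = r)
    (hrρ : ρ * t ≤ (r : ℝ))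
    (hX : (cardE P X : ℝ) < (d - ρ) * (r : ℝ) ^ s)
    (hW : d * (t : ℝ) ^ s ≤ (cardE P W : ℝ)) :
    ∃ B : Fin s → Finset α, (∀ i, B i ⊆ W i) ∧
      (∀ i, (B i).card = r ∨ (B i).card = t - r) ∧
      ((cardE P W : ℝ) + ρ ^ (s + 1) * (t : ℝ) ^ s) * ∏ i, ((B i).card : ℝ)
        ≤ (cardE P B : ℝ) * (t : ℝ) ^ s := by
  haveI : Nonempty (Fin s) := ⟨⟨0, hs1⟩⟩
  set Bx : Finset (Fin s) → (Fin s → Finset α) :=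
    fun S i => if i ∈ S then X i else W i \ X i with hBx
  have hsubB : ∀ S i, Bx S i ⊆ W i := by
    intro S i
    by_cases hiS : i ∈ S
    · simp only [hBx, if_pos hiS]; exact hXW i
    · simp only [hBx, if_neg hiS]; exact Finset.sdiff_subset
  have hcardB : ∀ S i, (Bx S i).card = r ∨ (Bx S i).card = t - r := by
    intro S i
    by_cases hiS : i ∈ S
    · left; simp only [hBx, if_pos hiS]; exact hXr i
    · right; simp only [hBx, if_neg hiS]
      rw [Finset.card_sdiff_of_subset (hXW i), hWt i, hXr i]
  by_contra hcon
  push_neg at hcon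
  have hstrict : ∀ S, (cardE P (Bx S) : ℝ) * (t : ℝ) ^ s
      < ((cardE P W : ℝ) + ρ ^ (s + 1) * (t : ℝ) ^ s) * ∏ i, ((Bx S i).card : ℝ) :=
    fun S => hcon (Bx S) (hsubB S) (hcardB S)
  set Pud := ((Finset.univ : Finset (Fin s)).powerset).erase Finset.univ with hPud
  have hne : Pud.Nonempty := by
    refine ⟨∅, Finset.mem_erase.2 ⟨?_, Finset.mem_powerset.2 (Finset.empty_subset _)⟩⟩
    exact Ne.symm (Finset.univ_nonempty.ne_empty)
  have hBuniv : Bx Finset.univ = X := by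
    funext i; simp [hBx]
  have hpart : ∑ S ∈ (Finset.univ : Finset (Fin s)).powerset, cardE P (Bx S) = cardE P W := by
    simp only [hBx]
    exact sum_partition P W X hXW
  have hvpart : ∑ S ∈ (Finset.univ : Finset (Fin s)).powerset, ∏ i, (Bx S i).card = t ^ s := by
    simp only [hBx]
    exact sum_vol_partition W X hXW hWt hXr
  -- edge sum identity
  have hEsum : (∑ S ∈ Pud, cardE P (Bx S)) + cardE P X = cardE P W := by
    have h1 := Finset.sum_erase_add ((Finset.univ : Finset (Fin s)).powerset)
      (fun S => cardE P (Bx S)) (Finset.mem_powerset.2 (Finset.Subset.refl _))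
    simp only [hBuniv] at h1
    rw [hpart] at h1
    exact h1
  -- volume sum identity
  have hVsum : (∑ S ∈ Pud, ∏ i, (Bx S i).card) + r ^ s = t ^ s := by
    have h1 := Finset.sum_erase_add ((Finset.univ : Finset (Fin s)).powerset)
      (fun S => ∏ i, (Bx S i).card) (Finset.mem_powerset.2 (Finset.Subset.refl _))
    have h2 : ∏ i, (Bx Finset.univ i).card = r ^ s := by
      rw [hBuniv]
      rw [Finset.prod_congr rfl (fun i _ => hXr i)]
      simp [Finset.prod_const]
    rw [h2, hvpart] at h1
    exact h1
  have hsum := Finset.sum_lt_sum_of_nonempty hne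
    (fun S _ => hstrict S)
  -- cast the two identities
  have hEsumR : (∑ S ∈ Pud, (cardE P (Bx S) : ℝ)) = (cardE P W : ℝ) - (cardE P X : ℝ) := by
    have := congrArg (fun n : ℕ => (n : ℝ)) hEsum
    push_cast at this
    linarith [this]
  have hVsumR : (∑ S ∈ Pud, ∏ i, ((Bx S i).card : ℝ)) = (t : ℝ) ^ s - (r : ℝ) ^ s := by
    have := congrArg (fun n : ℕ => (n : ℝ)) hVsum
    push_cast at this
    linarith [this]
  rw [← Finset.sum_mul, hEsumR, ← Finset.mul_sum, hVsumR] at hsum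
  -- now derive a contradiction
  set T := (t : ℝ)
  set R := (r : ℝ)
  set A := (cardE P W : ℝ)
  set x := (cardE P X : ℝ)
  have hT0 : (0:ℝ) ≤ T := Nat.cast_nonneg t
  have hR0 : (0:ℝ) ≤ R := Nat.cast_nonneg r
  have hu : (0:ℝ) ≤ T ^ s := pow_nonneg hT0 s
  have hv : (0:ℝ) ≤ R ^ s := pow_nonneg hR0 s
  have h3 : ρ ^ s * T ^ s ≤ R ^ s := by
    calc ρ ^ s * T ^ s = (ρ * T) ^ s := by rw [mul_pow]
      _ ≤ R ^ s := pow_le_pow_left₀ (by positivity) hrρ s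
  have e2 : d * T ^ s * R ^ s ≤ A * R ^ s :=
    mul_le_mul_of_nonneg_right hW hv
  have e3 : x * T ^ s ≤ (d - ρ) * R ^ s * T ^ s :=
    mul_le_mul_of_nonneg_right hX.le hu
  have e4 : ρ ^ (s + 1) * (T ^ s * T ^ s) ≤ ρ * (R ^ s * T ^ s) := by
    have : ρ ^ (s + 1) = ρ * ρ ^ s := by ring
    rw [this]
    have := mul_le_mul_of_nonneg_right h3 hu
    nlinarith [this]
  nlinarith [hsum, e2, e3, e4, mul_nonneg (mul_nonneg (pow_nonneg hρ.le (s+1)) hu) hv]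
end

lemma log_le_div_e {y : ℝ} (hy : 0 < y) : Real.log y ≤ y / Real.exp 1 := by
  have h1 : Real.log (y / Real.exp 1) ≤ y / Real.exp 1 - 1 :=
    Real.log_le_sub_one_of_pos (by positivity)
  rw [Real.log_div (ne_of_gt hy) (ne_of_gt (Real.exp_pos 1)), Real.log_exp] at h1
  linarith

lemma key_ineq {x : ℝ} (hx : 0 < x) (hx2 : x ≤ 1/2) :
    2 * x * (1 - x) * Real.log (2 / x) ≤ 1 := by
  have he : (2.7182818283 : ℝ) < Real.exp 1 := Real.exp_one_gt_d9
  have hlog2 : Real.log 2 < 0.6931471808 := Real.log_two_lt_d9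
  have hlog2' : (0:ℝ) ≤ Real.log 2 := Real.log_nonneg (by norm_num)
  have hxy : 0 < 1 - x := by linarith
  set u := Real.sqrt x with hu
  have hu0 : 0 < u := Real.sqrt_pos.2 hx
  have hu2 : u ^ 2 = x := Real.sq_sqrt hx.le
  have hsplit : Real.log (2 / x) = Real.log 2 + Real.log (1 / x) := by
    rw [Real.log_div (by norm_num) (ne_of_gt hx), Real.log_div (by norm_num) (ne_of_gt hx)]
    ring_nf
    rw [Real.log_one]
    ring
  have hlogx : Real.log (1 / x) = 2 * Real.log (1 / u) := by
    rw [← hu2]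
    rw [one_div, one_div, Real.log_inv, Real.log_inv, Real.log_pow]
    push_cast
    ring
  have hloguu : Real.log (1 / u) ≤ (1 / u) / Real.exp 1 := log_le_div_e (by positivity)
  -- bound: 2*x*(1-x)*log(1/x) ≤ 4*u*(1-x)/e  (using x = u²)
  have hb1 : 2 * x * (1 - x) * Real.log (1 / x) ≤ 4 * (u * (1 - x)) / Real.exp 1 := by
    rw [hlogx]
    have h1 : 2 * x * (1 - x) * (2 * Real.log (1 / u)) ≤ 2 * x * (1-x) * (2 * ((1/u)/Real.exp 1)) := by
      apply mul_le_mul_of_nonneg_left (by linarith) (by nlinarith)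
    calc 2 * x * (1 - x) * (2 * Real.log (1 / u)) ≤ 2 * x * (1-x) * (2 * ((1/u)/Real.exp 1)) := h1
      _ = 4 * ((x / u) * (1 - x)) / Real.exp 1 := by field_simp; ring
      _ = 4 * (u * (1 - x)) / Real.exp 1 := by
          congr 2
          have : x / u = u := by
            rw [← hu2]; field_simp
          rw [this]
  -- u * (1 - x) = u * (1 - u²) ≤ 0.385
  have hb2 : u * (1 - x) ≤ 0.385 := by
    rw [← hu2]
    have hsq : (u * (1 - u ^ 2)) ^ 2 ≤ 4 / 27 := by nlinarith [sq_nonneg (3 * u^2 - 1), sq_nonneg u, hu2, hx2]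
    nlinarith [hsq, hu0, sq_nonneg (u * (1 - u^2) - 0.385)]
  have he' : (0:ℝ) < Real.exp 1 := Real.exp_pos 1
  have hb3 : 4 * (u * (1 - x)) / Real.exp 1 ≤ 4 * 0.385 / 2.7182818283 := by
    apply div_le_div₀ (by norm_num) (by linarith) (by norm_num) (by linarith)
  have hb4 : 2 * x * (1 - x) * Real.log 2 ≤ (1/2) * 0.6931471808 := by
    have hxx : 2 * x * (1 - x) ≤ 1/2 := by nlinarith
    calc 2 * x * (1 - x) * Real.log 2 ≤ (1/2) * Real.log 2 := by
          apply mul_le_mul_of_nonneg_right hxx hlog2'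
      _ ≤ (1/2) * 0.6931471808 := by linarith
  have hlogpos : 0 ≤ Real.log (1 / x) := Real.log_nonneg (by rw [le_div_iff₀ hx]; linarith)
  calc 2 * x * (1 - x) * Real.log (2 / x)
      = 2 * x * (1 - x) * Real.log 2 + 2 * x * (1 - x) * Real.log (1 / x) := by
        rw [hsplit]; ring
    _ ≤ (1/2) * 0.6931471808 + 4 * 0.385 / 2.7182818283 := by
        have := hb1.trans hb3
        linarith
    _ ≤ 1 := by norm_num

set_option maxHeartbeats 1600000 in
lemma stmt9_aux {s : ℕ} (hs2 : 2 ≤ s) {α : Type} [DecidableEq α]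
    (P : Finset (Fin s → α)) (d ρ : ℝ) (hρ : 0 < ρ) (hρ1 : ρ < 1) :
    ∀ (n : ℕ) (t : ℕ) (W : Fin s → Finset α),
      (∀ i, (W i).card = t) →
      d * (t:ℝ) ^ s ≤ (cardE P W : ℝ) →
      (1 - (n:ℝ) * ρ^(s+1)) * (t:ℝ)^s < (cardE P W : ℝ) + ρ^(s+1) * (t:ℝ)^s →
      2 / (min ρ (1 - ρ)) ≤ (min ρ (1-ρ)/2)^n * (t:ℝ) →
      ∃ (m₁ : ℕ) (W' : Fin s → Finset α),
        (∀ i, W' i ⊆ W i) ∧ (∀ i, (W' i).card = m₁) ∧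
        ((min ρ (1-ρ)/2)^n * (t:ℝ) ≤ (m₁:ℝ)) ∧
        (∀ X : Fin s → Finset α, (∀ i, X i ⊆ W' i) → (∀ i, ρ * (m₁:ℝ) ≤ ((X i).card : ℝ)) →
          (d - ρ) * ∏ i, ((X i).card : ℝ) ≤ (cardE P X : ℝ)) := by
  have hs1 : 1 ≤ s := by omega
  set c₀ := min ρ (1 - ρ) with hc₀def
  have hc₀ : 0 < c₀ := lt_min hρ (by linarith)
  have hc₀ρ : c₀ ≤ ρ := min_le_left _ _
  have hc₀ρ' : c₀ ≤ 1 - ρ := min_le_right _ _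
  have hc₀half : c₀ ≤ 1/2 := by
    rcases le_total ρ (1-ρ) with h | h
    · calc c₀ ≤ ρ := hc₀ρ
        _ ≤ 1/2 := by rw [hc₀def] at *; linarith
    · calc c₀ ≤ 1 - ρ := hc₀ρ'
        _ ≤ 1/2 := by linarith
  have hc2pos : 0 < c₀ / 2 := by linarith
  have hc2le : c₀ / 2 ≤ 1 := by linarith
  set ε := ρ ^ (s+1) with hεdef
  have hε : 0 < ε := pow_pos hρ _
  intro n
  induction n with
  | zero =>
    intro t W hWt hWd hW4 hW5
    simp only [pow_zero, one_mul] at hW5 ⊢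
    have hT : 2 / c₀ ≤ (t:ℝ) := hW5
    have hT4 : (4:ℝ) ≤ (t:ℝ) := by
      calc (4:ℝ) ≤ 2 / c₀ := by
            rw [le_div_iff₀ hc₀]; linarith
        _ ≤ (t:ℝ) := hT
    have hTpos : (0:ℝ) < (t:ℝ) := by linarith
    by_cases hLR : ∀ X : Fin s → Finset α, (∀ i, X i ⊆ W i) →
        (∀ i, ρ * (t:ℝ) ≤ ((X i).card : ℝ)) →
        (d - ρ) * ∏ i, ((X i).card : ℝ) ≤ (cardE P X : ℝ)
    · exact ⟨t, W, fun i => Finset.Subset.refl _, hWt, le_refl _, hLR⟩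
    · exfalso
      push_neg at hLR
      obtain ⟨X₀, hX₀W, hX₀c, hfail⟩ := hLR
      set r := ⌈ρ * (t:ℝ)⌉₊ with hrdef
      have hr_le : ∀ i, r ≤ (X₀ i).card := fun i => Nat.ceil_le.2 (hX₀c i)
      have hrR : ρ * (t:ℝ) ≤ (r:ℝ) := Nat.le_ceil _
      have hrR2 : (r:ℝ) < ρ * (t:ℝ) + 1 := Nat.ceil_lt_add_one (by positivity)
      have hc₀t : 2 ≤ c₀ * (t:ℝ) := by
        rw [div_le_iff₀ hc₀, mul_comm] at hT; linarith
      have hr_lt : r < t := by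
        have : (r:ℝ) < (t:ℝ) := by nlinarith
        exact_mod_cast this
      have hrpos : 1 ≤ r := Nat.ceil_pos.2 (by positivity)
      -- shrink X₀ to exact size r
      obtain ⟨X, hXX₀, hXr', _, hXineq⟩ :=
        shrink_many_lo P Finset.univ X₀ r (fun i _ => hr_le i)
      have hXr : ∀ i, (X i).card = r := fun i => hXr' i (Finset.mem_univ i)
      have hcards : (Finset.univ : Finset (Fin s)).card = s := by
        simp
      have hprodpos : (0:ℝ) < ∏ i, ((X₀ i).card : ℝ) := by
        apply Finset.prod_pos
        intro i _
        have := hr_le i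
        have : 1 ≤ (X₀ i).card := le_trans hrpos this
        exact_mod_cast Nat.lt_of_lt_of_le Nat.zero_lt_one this
      have hX : (cardE P X : ℝ) < (d - ρ) * (r:ℝ)^s := by
        have h1 : (cardE P X : ℝ) * ∏ i, ((X₀ i).card : ℝ)
            ≤ (cardE P X₀ : ℝ) * (r:ℝ)^s := by
          have := hXineq
          rw [hcards] at this
          exact_mod_cast this
        have h2 : (cardE P X₀ : ℝ) * (r:ℝ)^s < ((d - ρ) * (r:ℝ)^s) * ∏ i, ((X₀ i).card : ℝ) := by
          have hrs : (0:ℝ) < (r:ℝ)^s := by positivity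
          nlinarith [hfail, hrs, hprodpos]
        have h3 : (cardE P X : ℝ) * ∏ i, ((X₀ i).card : ℝ)
            < ((d - ρ) * (r:ℝ)^s) * ∏ i, ((X₀ i).card : ℝ) := lt_of_le_of_lt h1 h2
        exact lt_of_mul_lt_mul_right h3 (le_of_lt hprodpos)
      obtain ⟨B, hBW, hBcard, hBineq⟩ :=
        stmt9_increment P d ρ hρ hs1 W X hWt
          (fun i => (hXX₀ i).trans (hX₀W i)) hXr hrR hX hWd
      have hBone : ∀ i, 1 ≤ (B i).card := by
        intro i
        rcases hBcard i with h | h <;> omega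
      have hvol1n : (1:ℕ) ≤ ∏ i, (B i).card :=
        Finset.one_le_prod' (fun i _ => hBone i)
      have hvolpos : (0:ℝ) < ∏ i, ((B i).card : ℝ) := by
        have : ((1:ℕ):ℝ) ≤ ((∏ i, (B i).card : ℕ) : ℝ) := by exact_mod_cast hvol1n
        push_cast at this
        linarith
      have hEB : (cardE P B : ℝ) ≤ ∏ i, ((B i).card : ℝ) := by
        have h0 := cardE_le_vol P B
        have : ((cardE P B : ℕ) : ℝ) ≤ ((∏ i, (B i).card : ℕ) : ℝ) := by exact_mod_cast h0
        push_cast at this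
        linarith
      have hTs : (0:ℝ) < (t:ℝ)^s := by positivity
      have hchain : ((cardE P W : ℝ) + ε * (t:ℝ)^s) * ∏ i, ((B i).card : ℝ)
          ≤ ((t:ℝ)^s) * ∏ i, ((B i).card : ℝ) := by
        calc ((cardE P W : ℝ) + ε * (t:ℝ)^s) * ∏ i, ((B i).card : ℝ)
            ≤ (cardE P B : ℝ) * (t:ℝ)^s := hBineq
          _ ≤ (∏ i, ((B i).card : ℝ)) * (t:ℝ)^s :=
              mul_le_mul_of_nonneg_right hEB hTs.le
          _ = ((t:ℝ)^s) * ∏ i, ((B i).card : ℝ) := by ring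
      have hfin : (cardE P W : ℝ) + ε * (t:ℝ)^s ≤ (t:ℝ)^s :=
        le_of_mul_le_mul_right hchain hvolpos
      have hW4' : (1:ℝ) * (t:ℝ)^s < (cardE P W : ℝ) + ε * (t:ℝ)^s := by
        have := hW4
        norm_num at this
        linarith
      linarith
  | succ n ih =>
    intro t W hWt hWd hW4 hW5
    have hpowle : (c₀/2)^(n+1) ≤ 1 := pow_le_one₀ hc2pos.le hc2le
    have hTge : 2 / c₀ ≤ (t:ℝ) := by
      calc 2 / c₀ ≤ (c₀/2)^(n+1) * (t:ℝ) := hW5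
        _ ≤ 1 * (t:ℝ) := by
            apply mul_le_mul_of_nonneg_right hpowle (Nat.cast_nonneg t)
        _ = (t:ℝ) := one_mul _
    have hT4 : (4:ℝ) ≤ (t:ℝ) := by
      calc (4:ℝ) ≤ 2 / c₀ := by rw [le_div_iff₀ hc₀]; linarith
        _ ≤ (t:ℝ) := hTge
    have hTpos : (0:ℝ) < (t:ℝ) := by linarith
    have hTs : (0:ℝ) < (t:ℝ)^s := by positivity
    by_cases hLR : ∀ X : Fin s → Finset α, (∀ i, X i ⊆ W i) →
        (∀ i, ρ * (t:ℝ) ≤ ((X i).card : ℝ)) →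
        (d - ρ) * ∏ i, ((X i).card : ℝ) ≤ (cardE P X : ℝ)
    · refine ⟨t, W, fun i => Finset.Subset.refl _, hWt, ?_, hLR⟩
      calc (c₀/2)^(n+1) * (t:ℝ) ≤ 1 * (t:ℝ) :=
            mul_le_mul_of_nonneg_right hpowle (Nat.cast_nonneg t)
        _ = (t:ℝ) := one_mul _
    · push_neg at hLR
      obtain ⟨X₀, hX₀W, hX₀c, hfail⟩ := hLR
      set r := ⌈ρ * (t:ℝ)⌉₊ with hrdef
      have hr_le : ∀ i, r ≤ (X₀ i).card := fun i => Nat.ceil_le.2 (hX₀c i)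
      have hrR : ρ * (t:ℝ) ≤ (r:ℝ) := Nat.le_ceil _
      have hrR2 : (r:ℝ) < ρ * (t:ℝ) + 1 := Nat.ceil_lt_add_one (by positivity)
      have hc₀t : 2 ≤ c₀ * (t:ℝ) := by
        rw [div_le_iff₀ hc₀, mul_comm] at hTge; linarith
      have hr_lt : r < t := by
        have : (r:ℝ) < (t:ℝ) := by nlinarith
        exact_mod_cast this
      have hrpos : 1 ≤ r := Nat.ceil_pos.2 (by positivity)
      obtain ⟨X, hXX₀, hXr', _, hXineq⟩ :=
        shrink_many_lo P Finset.univ X₀ r (fun i _ => hr_le i)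
      have hXr : ∀ i, (X i).card = r := fun i => hXr' i (Finset.mem_univ i)
      have hcards : (Finset.univ : Finset (Fin s)).card = s := by simp
      have hprodpos : (0:ℝ) < ∏ i, ((X₀ i).card : ℝ) := by
        apply Finset.prod_pos
        intro i _
        have h1 := hr_le i
        have h2 : 1 ≤ (X₀ i).card := le_trans hrpos h1
        exact_mod_cast Nat.lt_of_lt_of_le Nat.zero_lt_one h2
      have hX : (cardE P X : ℝ) < (d - ρ) * (r:ℝ)^s := by
        have h1 : (cardE P X : ℝ) * ∏ i, ((X₀ i).card : ℝ)
            ≤ (cardE P X₀ : ℝ) * (r:ℝ)^s := by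
          have := hXineq
          rw [hcards] at this
          exact_mod_cast this
        have h2 : (cardE P X₀ : ℝ) * (r:ℝ)^s < ((d - ρ) * (r:ℝ)^s) * ∏ i, ((X₀ i).card : ℝ) := by
          have hrs : (0:ℝ) < (r:ℝ)^s := by positivity
          nlinarith [hfail, hrs, hprodpos]
        exact lt_of_mul_lt_mul_right (lt_of_le_of_lt h1 h2) (le_of_lt hprodpos)
      obtain ⟨B, hBW, hBcard, hBineq⟩ :=
        stmt9_increment P d ρ hρ hs1 W X hWt
          (fun i => (hXX₀ i).trans (hX₀W i)) hXr hrR hX hWd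
      -- rebalance B to common size t'
      set t' := min r (t - r) with ht'def
      have ht'B : ∀ i ∈ (Finset.univ : Finset (Fin s)), t' ≤ (B i).card := by
        intro i _
        rcases hBcard i with h | h <;> rw [h]
        · exact min_le_left _ _
        · exact min_le_right _ _
      obtain ⟨Y, hYB, hYcard', _, hYineq⟩ := shrink_many_hi P Finset.univ B t' ht'B
      have hYcard : ∀ i, (Y i).card = t' := fun i => hYcard' i (Finset.mem_univ i)
      have ht'pos : 1 ≤ t' := by
        have h1 : 1 ≤ t - r := by omega
        exact le_min hrpos h1
      have ht'R : (0:ℝ) < (t':ℝ) := by exact_mod_cast ht'pos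
      have hvolpos : (0:ℝ) < ∏ i, ((B i).card : ℝ) := by
        apply Finset.prod_pos
        intro i _
        exact_mod_cast Nat.lt_of_lt_of_le Nat.zero_lt_one (by
          rcases hBcard i with h | h <;> omega)
      -- key real inequality: (E_W + ε T^s) * t'^s ≤ E_Y * T^s
      have hYR : (cardE P B : ℝ) * (t':ℝ)^s ≤ (cardE P Y : ℝ) * ∏ i, ((B i).card : ℝ) := by
        have := hYineq
        rw [hcards] at this
        have h2 : ((cardE P B * t' ^ s : ℕ) : ℝ) ≤ ((cardE P Y * ∏ i, (B i).card : ℕ) : ℝ) := by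
          exact_mod_cast this
        push_cast at h2
        linarith [h2]
      have hEY : ((cardE P W : ℝ) + ε * (t:ℝ)^s) * (t':ℝ)^s ≤ (cardE P Y : ℝ) * (t:ℝ)^s := by
        have hstep : (((cardE P W : ℝ) + ε * (t:ℝ)^s) * (t':ℝ)^s) * ∏ i, ((B i).card : ℝ)
            ≤ ((cardE P Y : ℝ) * (t:ℝ)^s) * ∏ i, ((B i).card : ℝ) := by
          calc (((cardE P W : ℝ) + ε * (t:ℝ)^s) * (t':ℝ)^s) * ∏ i, ((B i).card : ℝ)
              = (((cardE P W : ℝ) + ε * (t:ℝ)^s) * ∏ i, ((B i).card : ℝ)) * (t':ℝ)^s := by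
                ring
            _ ≤ ((cardE P B : ℝ) * (t:ℝ)^s) * (t':ℝ)^s :=
                mul_le_mul_of_nonneg_right hBineq (by positivity)
            _ = ((cardE P B : ℝ) * (t':ℝ)^s) * (t:ℝ)^s := by ring
            _ ≤ ((cardE P Y : ℝ) * ∏ i, ((B i).card : ℝ)) * (t:ℝ)^s :=
                mul_le_mul_of_nonneg_right hYR hTs.le
            _ = ((cardE P Y : ℝ) * (t:ℝ)^s) * ∏ i, ((B i).card : ℝ) := by ring
        exact le_of_mul_le_mul_right hstep hvolpos
      -- hypotheses of the induction at (t', Y)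
      have ht's : (0:ℝ) < (t':ℝ)^s := by positivity
      have hYd : d * (t':ℝ)^s ≤ (cardE P Y : ℝ) := by
        have h1 : d * (t:ℝ)^s * (t':ℝ)^s ≤ ((cardE P W : ℝ) + ε * (t:ℝ)^s) * (t':ℝ)^s := by
          apply mul_le_mul_of_nonneg_right _ ht's.le
          nlinarith [hε, hTs]
        have h2 : (d * (t':ℝ)^s) * (t:ℝ)^s ≤ (cardE P Y : ℝ) * (t:ℝ)^s := by
          calc (d * (t':ℝ)^s) * (t:ℝ)^s = d * (t:ℝ)^s * (t':ℝ)^s := by ring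
            _ ≤ ((cardE P W : ℝ) + ε * (t:ℝ)^s) * (t':ℝ)^s := h1
            _ ≤ (cardE P Y : ℝ) * (t:ℝ)^s := hEY
        exact le_of_mul_le_mul_right h2 hTs
      have hY4 : (1 - (n:ℝ) * ε) * (t':ℝ)^s < (cardE P Y : ℝ) + ε * (t':ℝ)^s := by
        have h1 : ((1 - ((n:ℝ)+1) * ε) * (t':ℝ)^s) * (t:ℝ)^s < (cardE P Y : ℝ) * (t:ℝ)^s := by
          calc ((1 - ((n:ℝ)+1) * ε) * (t':ℝ)^s) * (t:ℝ)^s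
              = ((1 - ((n:ℝ)+1) * ε) * (t:ℝ)^s) * (t':ℝ)^s := by ring
            _ < (((cardE P W : ℝ)) + ε * (t:ℝ)^s) * (t':ℝ)^s := by
                apply mul_lt_mul_of_pos_right _ ht's
                have := hW4
                push_cast at this ⊢
                linarith
            _ ≤ (cardE P Y : ℝ) * (t:ℝ)^s := hEY
        have h2 : (1 - ((n:ℝ)+1) * ε) * (t':ℝ)^s < (cardE P Y : ℝ) :=
          lt_of_mul_lt_mul_right h1 hTs.le
        nlinarith [h2, ht's, hε]
      have ht'c : (c₀/2) * (t:ℝ) ≤ (t':ℝ) := by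
        rcases min_choice r (t - r) with h | h
        · rw [ht'def, h]
          calc (c₀/2) * (t:ℝ) ≤ ρ * (t:ℝ) := by nlinarith
            _ ≤ (r:ℝ) := hrR
        · rw [ht'def, h]
          have hcast : ((t - r : ℕ) : ℝ) = (t:ℝ) - (r:ℝ) := by
            have : r ≤ t := le_of_lt hr_lt
            push_cast [this]
            ring
          rw [hcast]
          have h1 : (c₀/2) * (t:ℝ) ≥ 1 := by
            calc (c₀/2) * (t:ℝ) ≥ (c₀/2) * (2/c₀) := by
                  apply mul_le_mul_of_nonneg_left hTge hc2pos.le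
              _ = 1 := by field_simp
          nlinarith [hrR2, hc₀ρ', hTpos]
      have hY5 : 2 / c₀ ≤ (c₀/2)^n * (t':ℝ) := by
        calc 2 / c₀ ≤ (c₀/2)^(n+1) * (t:ℝ) := hW5
          _ = (c₀/2)^n * ((c₀/2) * (t:ℝ)) := by ring
          _ ≤ (c₀/2)^n * (t':ℝ) := by
              apply mul_le_mul_of_nonneg_left ht'c (pow_nonneg hc2pos.le n)
      obtain ⟨m₁, W', hW'Y, hW'card, hW'size, hW'LR⟩ := ih t' Y hYcard hYd hY4 hY5
      refine ⟨m₁, W', ?_, hW'card, ?_, hW'LR⟩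
      · exact fun i => ((hW'Y i).trans (hYB i)).trans (hBW i)
      · calc (c₀/2)^(n+1) * (t:ℝ) = (c₀/2)^n * ((c₀/2) * (t:ℝ)) := by ring
          _ ≤ (c₀/2)^n * (t':ℝ) :=
              mul_le_mul_of_nonneg_left ht'c (pow_nonneg hc2pos.le n)
          _ ≤ (m₁:ℝ) := hW'size

set_option maxHeartbeats 1600000


/-- Regular tuple: an `m`-balanced `s`-partite `s`-graph `P` with
`e(P) ≥ d·m^s` contains an `m₁`-balanced `(ρ,d)`-lower-regular tuple with
`m₁ ≥ exp(−ρ^{−2s})·m`. -/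
theorem stmt9 (s : ℕ) (hs : 1 ≤ s) (d ρ : ℝ) (hd : 0 < d) (hρ : 0 < ρ) :
    ∃ m₀ : ℕ, ∀ m : ℕ, m₀ ≤ m →
    ∀ (α : Type) [DecidableEq α] (V : Fin s → Finset α),
      (∀ i j, i ≠ j → Disjoint (V i) (V j)) → (∀ i, (V i).card = m) →
    ∀ P : Finset (Fin s → α), (∀ e ∈ P, ∀ i, e i ∈ V i) →
      d * (m : ℝ) ^ s ≤ (P.card : ℝ) →
    ∃ (m₁ : ℕ) (W : Fin s → Finset α),
      (∀ i, W i ⊆ V i) ∧ (∀ i, (W i).card = m₁) ∧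
      Real.exp (-(1 / ρ ^ (2 * s))) * m ≤ (m₁ : ℝ) ∧
      ∀ X : Fin s → Finset α, (∀ i, X i ⊆ W i) → (∀ i, ρ * m₁ ≤ ((X i).card : ℝ)) →
        (d - ρ) * ∏ i, ((X i).card : ℝ) ≤ ((P.filter fun e => ∀ i, e i ∈ X i).card : ℝ) := by
  have hexp_le_one : Real.exp (-(1 / ρ ^ (2 * s))) ≤ 1 := by
    rw [Real.exp_le_one_iff]
    have h0 : (0:ℝ) < ρ ^ (2*s) := pow_pos hρ _
    have h1 : (0:ℝ) < 1 / ρ ^ (2*s) := one_div_pos.2 h0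
    linarith
  by_cases hdρ : d ≤ ρ
  · -- trivial case: d - ρ ≤ 0
    refine ⟨1, fun m hm α _ V hdisj hVcard P hP hPd => ⟨m, V, fun i => Finset.Subset.refl _, hVcard, ?_, ?_⟩⟩
    · calc Real.exp (-(1 / ρ ^ (2 * s))) * m ≤ 1 * m :=
          mul_le_mul_of_nonneg_right hexp_le_one (Nat.cast_nonneg m)
        _ = (m:ℝ) := one_mul _
    · intro X hXV hXc
      have h1 : (d - ρ) * ∏ i, ((X i).card : ℝ) ≤ 0 := by
        apply mul_nonpos_iff.2
        exact Or.inr ⟨by linarith, Finset.prod_nonneg fun i _ => Nat.cast_nonneg _⟩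
      exact h1.trans (Nat.cast_nonneg _)
  · push_neg at hdρ
    by_cases hs1 : s = 1
    · -- s = 1 : image argument
      subst hs1
      refine ⟨1, fun m hm α _ V hdisj hVcard P hP hPd => ?_⟩
      have hm1 : (1:ℝ) ≤ (m:ℝ) := by exact_mod_cast hm
      have hPm : (P.card : ℝ) ≤ (m:ℝ) := by
        have hsub : P ⊆ Fintype.piFinset V := by
          intro e he
          rw [Fintype.mem_piFinset]
          exact hP e he
        have h1 : P.card ≤ (Fintype.piFinset V).card := Finset.card_le_card hsub
        rw [Fintype.card_piFinset] at h1
        have h2 : ∏ i, (V i).card = m := by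
          rw [Fin.prod_univ_one, hVcard 0]
        rw [h2] at h1
        exact_mod_cast h1
    -- d ≤ 1
      have hd1 : d ≤ 1 := by
        have h1 : d * (m:ℝ) ^ 1 ≤ (m:ℝ) := hPd.trans hPm
        rw [pow_one] at h1
        nlinarith
      have hρ1 : ρ < 1 := lt_of_lt_of_le hdρ hd1
      refine ⟨P.card, fun _ => P.image (fun e => e 0), ?_, ?_, ?_, ?_⟩
      · intro i x hx
        obtain ⟨e, he, rfl⟩ := Finset.mem_image.1 hx
        have h0 : i = 0 := Subsingleton.elim i 0
        rw [h0]
        exact hP e he 0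
      · intro i
        apply Finset.card_image_of_injOn
        intro e1 h1 e2 h2 he
        funext j
        have : j = 0 := Subsingleton.elim j 0
        rw [this]
        exact he
      · -- size bound
        have hexpρ : Real.exp (-(1 / ρ ^ (2 * 1))) ≤ ρ := by
          have hlog : Real.log (1/ρ) ≤ 1/ρ - 1 :=
            Real.log_le_sub_one_of_pos (one_div_pos.2 hρ)
          have hlog2 : Real.log (1/ρ) = - Real.log ρ := by
            rw [one_div, Real.log_inv]
          rw [hlog2] at hlog
          have hcmp : 1/ρ ≤ 1/ρ^(2*1) := by
            apply one_div_le_one_div_of_le (pow_pos hρ (2*1))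
            have he : ρ^(2*1) = ρ*ρ := by ring
            nlinarith [mul_nonneg hρ.le (by linarith : (0:ℝ) ≤ 1 - ρ), he]
          calc Real.exp (-(1 / ρ ^ (2 * 1))) ≤ Real.exp (Real.log ρ) := by
                apply Real.exp_le_exp.2
                linarith
            _ = ρ := Real.exp_log hρ
        calc Real.exp (-(1 / ρ ^ (2 * 1))) * m ≤ ρ * m :=
              mul_le_mul_of_nonneg_right hexpρ (Nat.cast_nonneg m)
          _ ≤ d * m := mul_le_mul_of_nonneg_right hdρ.le (Nat.cast_nonneg m)
          _ = d * (m:ℝ)^1 := by rw [pow_one]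
          _ ≤ (P.card : ℝ) := hPd
      · intro X hXW hXc
        rw [Fin.prod_univ_one]
        have hsubX : X 0 ⊆ (P.filter fun e => ∀ i, e i ∈ X i).image (fun e => e 0) := by
          intro v hv
          have hv' : v ∈ P.image (fun e => e 0) := hXW 0 hv
          obtain ⟨e, he, rfl⟩ := Finset.mem_image.1 hv'
          refine Finset.mem_image.2 ⟨e, Finset.mem_filter.2 ⟨he, fun i => ?_⟩, rfl⟩
          rw [show i = (0 : Fin 1) from Subsingleton.elim i 0]
          exact hv
        have h1 : (X 0).card ≤ (P.filter fun e => ∀ i, e i ∈ X i).card :=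
          (Finset.card_le_card hsubX).trans Finset.card_image_le
        have h1' : ((X 0).card : ℝ) ≤ ((P.filter fun e => ∀ i, e i ∈ X i).card : ℝ) := by
          exact_mod_cast h1
        nlinarith [h1', hd1, hρ, (by positivity : (0:ℝ) ≤ ((X 0).card:ℝ))]
    · -- main case : s ≥ 2
      have hs2 : 2 ≤ s := by omega
      refine ⟨⌈(2 / (min ρ (1-ρ)) + 2) * Real.exp (1 / ρ ^ (2*s))⌉₊ + 1,
        fun m hm α _ V hdisj hVcard P hP hPd => ?_⟩
      have hm1 : 1 ≤ m := by omega
      have hmR1 : (1:ℝ) ≤ (m:ℝ) := by exact_mod_cast hm1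
      -- edge count of the full box
      have hVE : cardE P V = P.card := by
        unfold cardE
        rw [Finset.filter_true_of_mem (fun e he => hP e he)]
      have hPle : (P.card : ℝ) ≤ (m:ℝ)^s := by
        have h1 := cardE_le_vol P V
        rw [hVE] at h1
        have h2 : ∏ i, (V i).card = m ^ s := by
          rw [Finset.prod_congr rfl (fun i _ => hVcard i)]
          simp [Finset.prod_const]
        rw [h2] at h1
        exact_mod_cast h1
      have hd1 : d ≤ 1 := by
        have h1 : d * (m:ℝ)^s ≤ (m:ℝ)^s := hPd.trans hPle
        have h2 : (0:ℝ) < (m:ℝ)^s := by positivity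
        nlinarith
      have hρ1 : ρ < 1 := lt_of_lt_of_le hdρ hd1
      set c₀ := min ρ (1 - ρ) with hc₀def
      have hc₀ : 0 < c₀ := lt_min hρ (by linarith)
      have hc₀ρ : c₀ ≤ ρ := min_le_left _ _
      have hc₀ρ' : c₀ ≤ 1 - ρ := min_le_right _ _
      have hc₀half : c₀ ≤ 1/2 := by
        rcases le_total ρ (1-ρ) with h | h
        · calc c₀ ≤ ρ := hc₀ρ
            _ ≤ 1/2 := by linarith
        · calc c₀ ≤ 1 - ρ := hc₀ρ'
            _ ≤ 1/2 := by linarith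
      set ε := ρ ^ (s+1) with hεdef
      have hε : 0 < ε := pow_pos hρ _
      set Bex := (1 : ℝ) / ρ ^ (2*s) with hBdef
      have hBpos : 0 < Bex := by positivity
      set K := Real.exp (-Bex) with hKdef
      have hKpos : 0 < K := Real.exp_pos _
      have hK1 : K ≤ 1 := by
        rw [hKdef, Real.exp_le_one_iff]
        linarith
      have hmR : (2/c₀ + 2) * Real.exp Bex ≤ (m:ℝ) := by
        have h1 : ((2 / c₀ + 2) * Real.exp Bex) ≤ (⌈(2 / c₀ + 2) * Real.exp Bex⌉₊ : ℝ) :=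
          Nat.le_ceil _
        have h2 : (⌈(2 / c₀ + 2) * Real.exp Bex⌉₊ : ℝ) ≤ (m:ℝ) := by
          have : ⌈(2 / c₀ + 2) * Real.exp Bex⌉₊ ≤ m := by omega
          exact_mod_cast this
        linarith
      have hKm : 2/c₀ + 2 ≤ K * m := by
        have h1 : K * ((2/c₀ + 2) * Real.exp Bex) ≤ K * m :=
          mul_le_mul_of_nonneg_left hmR hKpos.le
        have h2 : K * Real.exp Bex = 1 := by
          rw [hKdef, ← Real.exp_add]
          simp
        calc 2/c₀ + 2 = (2/c₀ + 2) * (K * Real.exp Bex) := by rw [h2]; ring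
          _ = K * ((2/c₀ + 2) * Real.exp Bex) := by ring
          _ ≤ K * m := h1
      have hm2c : 2/c₀ ≤ (m:ℝ) := by
        have : K * m ≤ 1 * m := mul_le_mul_of_nonneg_right hK1 (Nat.cast_nonneg m)
        rw [one_mul] at this
        linarith
      have hdV : d * (m:ℝ)^s ≤ (cardE P V : ℝ) := by
        rw [hVE]; exact hPd
      have hms : (0:ℝ) < (m:ℝ)^s := by positivity
      -- choose the budget n
      obtain ⟨n, hn4, hnpow⟩ :
          ∃ n : ℕ, ((1 - (n:ℝ) * ε) * (m:ℝ)^s < (cardE P V : ℝ) + ε * (m:ℝ)^s)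
            ∧ K ≤ (c₀/2)^n := by
        by_cases hcase : 1 - d < ε
        · refine ⟨0, ?_, by simpa using hK1⟩
          push_cast
          rw [hVE]
          nlinarith [hPd, hms]
        · push_neg at hcase
          set N := ⌈(1-d)/ε⌉₊ with hNdef
          have hN1 : 1 - d ≤ (N:ℝ) * ε := by
            have h1 : (1-d)/ε ≤ (N:ℝ) := Nat.le_ceil _
            calc 1 - d = ((1-d)/ε) * ε := by field_simp
              _ ≤ (N:ℝ) * ε := mul_le_mul_of_nonneg_right h1 hε.le
          refine ⟨N, ?_, ?_⟩
          · rw [hVE]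
            have h1 : (1 - (N:ℝ)*ε) ≤ d := by linarith
            have h2 : (1 - (N:ℝ)*ε) * (m:ℝ)^s ≤ d * (m:ℝ)^s :=
              mul_le_mul_of_nonneg_right h1 hms.le
            nlinarith [hPd, hε, hms]
          · -- the budget estimate
            have hde : ε ≤ 1 - d := hcase
            have hone : (1:ℝ) ≤ (1-d)/ε := by
              rw [le_div_iff₀ hε]; linarith
            have hNle : (N:ℝ) ≤ 2 * (1-d) / ε := by
              have h1 : (N:ℝ) < (1-d)/ε + 1 := Nat.ceil_lt_add_one (by positivity)
              have h2 : (1-d)/ε + 1 ≤ 2 * ((1-d)/ε) := by linarith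
              calc (N:ℝ) ≤ 2 * ((1-d)/ε) := by linarith
                _ = 2 * (1-d) / ε := by ring
            have hlogpos : 0 ≤ Real.log (2/c₀) := by
              apply Real.log_nonneg
              rw [le_div_iff₀ hc₀]; linarith
            have hkey : 2 * ρ * (1-ρ) * Real.log (2/c₀) ≤ 1 := by
              have hmm : ρ * (1-ρ) = c₀ * (1-c₀) := by
                rcases min_choice ρ (1-ρ) with h | h
                · rw [hc₀def, h]
                · rw [hc₀def, h]; ring
              have := key_ineq hc₀ hc₀half
              nlinarith [this, hmm]
            have hexp2s : ρ^(2*s) = ρ^(s+1) * ρ^(s-1) := by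
              rw [← pow_add]
              congr 1
              omega
            have hpowle : ρ^(s-1) ≤ ρ := by
              have h1 : ρ^(s-1) ≤ ρ^1 :=
                pow_le_pow_of_le_one hρ.le hρ1.le (by omega)
              rwa [pow_one] at h1
            have hmain : (N:ℝ) * Real.log (2/c₀) ≤ Bex := by
              have h0 : 0 < ρ^(2*s) := pow_pos hρ _
              rw [hBdef, le_div_iff₀ h0]
              -- N * log * ρ^{2s} ≤ 1
              have h1 : (N:ℝ) * Real.log (2/c₀) * ρ^(2*s)
                  ≤ (2*(1-d)/ε) * Real.log (2/c₀) * ρ^(2*s) := by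
                apply mul_le_mul_of_nonneg_right _ h0.le
                exact mul_le_mul_of_nonneg_right hNle hlogpos
              have h2 : (2*(1-d)/ε) * Real.log (2/c₀) * ρ^(2*s)
                  = 2*(1-d) * Real.log (2/c₀) * ρ^(s-1) := by
                rw [hexp2s, hεdef]
                field_simp
              have h3 : 2*(1-d) * Real.log (2/c₀) * ρ^(s-1)
                  ≤ 2*(1-ρ) * Real.log (2/c₀) * ρ^(s-1) := by
                apply mul_le_mul_of_nonneg_right _ (by positivity)
                apply mul_le_mul_of_nonneg_right _ hlogpos
                linarith
              have h4 : 2*(1-ρ) * Real.log (2/c₀) * ρ^(s-1)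
                  ≤ 2*(1-ρ) * Real.log (2/c₀) * ρ := by
                apply mul_le_mul_of_nonneg_left hpowle
                have : 0 ≤ 1 - ρ := by linarith
                positivity
              have h5 : 2*(1-ρ) * Real.log (2/c₀) * ρ ≤ 1 := by nlinarith [hkey]
              linarith
            rw [hKdef]
            have hcpos : (0:ℝ) < (c₀/2)^N := by positivity
            rw [← Real.exp_log hcpos]
            apply Real.exp_le_exp.2
            rw [Real.log_pow]
            have hlogeq : Real.log (c₀/2) = - Real.log (2/c₀) := by
              rw [Real.log_div (ne_of_gt hc₀) (by norm_num),
                  Real.log_div (by norm_num) (ne_of_gt hc₀)]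
              ring
            rw [hlogeq]
            have : (N:ℝ) * Real.log (2/c₀) ≤ Bex := hmain
            nlinarith [this]
      -- initial size hypothesis
      have h5 : 2 / c₀ ≤ (c₀/2)^n * (m:ℝ) := by
        have h1 : K * m ≤ (c₀/2)^n * m :=
          mul_le_mul_of_nonneg_right hnpow (Nat.cast_nonneg m)
        linarith
      obtain ⟨m₁, W, hWV, hWcard, hWsize, hWLR⟩ :=
        stmt9_aux hs2 P d ρ hρ hρ1 n m V hVcard hdV hn4 h5
      refine ⟨m₁, W, hWV, hWcard, ?_, ?_⟩
      · have h1 : K * m ≤ (c₀/2)^n * m :=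
          mul_le_mul_of_nonneg_right hnpow (Nat.cast_nonneg m)
        calc Real.exp (-(1 / ρ ^ (2 * s))) * m = K * m := by rw [hKdef, hBdef]
          _ ≤ (c₀/2)^n * m := h1
          _ ≤ (m₁ : ℝ) := hWsize
      · intro X hXW hXc
        exact hWLR X hXW hXc
end

section
/- Let P be an n-vertex s-uniform hypergraph with δ₁(P) ≥ (1 − 1/s² + 3μ/4)·C(n−1, s−1) restricted in the following sense: let U be a family of r pairwise disjoint m₂-sets in V(P), and define the reduced s-graph R on vertex set U with an edge X whenever P contains at least 4ν·m₂^s X-partite edges (ν = μ/16). Suppose r^{s−2}·m₂^s ≤ (μ/4)·m₂^s·C(r−1, s−1) and every vertex x of R lies in at least (1 − 1/s² + 3μ/4)·m₂^s·C(r−1, s−1) U-partite edges of P through its part. Then δ₁(R) ≥ (1 − 1/s + μ/2)·C(r−1, s−1). -/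
/-!
Classify the `U`-partite edges `e ⊆ ⋃ U` of `P` through the part `x` by the set `X` of parts they
meet: `X` is an `s`-subset of `U` containing `x`, and there are at most `C(r-1, s-1)` of those.
Each class consists of `X`-partite edges, and an edge in it is determined by its traces on the
parts of `X`, so a class has at most `m₂^s` members, and fewer than `4ν·m₂^s` when `X` is not an
edge of `R`. Hence `(1 - 1/s² + 3μ/4)·m₂^s·C(r-1, s-1) ≤ m₂^s·deg_R(x) + 4ν·m₂^s·C(r-1, s-1)`,
and `4ν = μ/4`, `1/s² ≤ 1/s` give the bound.
-/

open Finset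

variable {α : Type*} [DecidableEq α]

lemma card_filter_mem_powersetCard_le (U : Finset α) {x : α} (hx : x ∈ U) (s : ℕ) :
    #((U.powersetCard s).filter (x ∈ ·)) ≤ (#U - 1).choose (s - 1) := by
  rw [← card_erase_of_mem hx, ← card_powersetCard]
  refine card_le_card_of_injOn (·.erase x) (fun X hX => ?_)
    ((erase_injOn' x).mono fun X hX => (mem_filter.mp hX).2)
  obtain ⟨hXp, hxX⟩ := mem_filter.mp hX
  obtain ⟨hXU, hXc⟩ := mem_powersetCard.mp hXp
  exact mem_powersetCard.mpr ⟨erase_subset_erase x hXU, by rw [card_erase_of_mem hxX, hXc]⟩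

lemma card_le_prod_card_of_card_inter_eq_one {X E : Finset (Finset α)}
    (hcover : ∀ e ∈ E, e ⊆ X.sup id) (hmeet : ∀ e ∈ E, ∀ A ∈ X, #(e ∩ A) = 1) :
    #E ≤ ∏ A ∈ X, #A := by
  have hsub : ∀ e₁ ∈ E, ∀ e₂ : Finset α, (∀ A ∈ X, e₁ ∩ A = e₂ ∩ A) → e₁ ⊆ e₂ := by
    intro e₁ he₁ e₂ h v hv
    obtain ⟨A, hA, hvA⟩ := mem_sup.mp (hcover e₁ he₁ hv)
    exact (mem_inter.mp (h A hA ▸ mem_inter.mpr ⟨hv, hvA⟩)).1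
  have hinj : (E : Set (Finset α)).InjOn fun e A (_ : A ∈ X) => e ∩ A := by
    intro e₁ he₁ e₂ he₂ h
    have h' : ∀ A ∈ X, e₁ ∩ A = e₂ ∩ A := fun A hA => congrFun (congrFun h A) hA
    exact (hsub e₁ he₁ e₂ h').antisymm (hsub e₂ he₂ e₁ fun A hA => (h' A hA).symm)
  calc #E ≤ #(X.pi fun A => A.powersetCard 1) :=
        card_le_card_of_injOn _ (fun e he => mem_pi.mpr fun A hA =>
          mem_powersetCard.mpr ⟨inter_subset_right, hmeet e he A hA⟩) hinj
    _ = ∏ A ∈ X, #A := by simp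

def meetingParts (U : Finset (Finset α)) (e : Finset α) : Finset (Finset α) :=
  U.filter fun A => (e ∩ A).Nonempty

section MeetingParts

variable {U : Finset (Finset α)} {e : Finset α}

lemma meetingParts_subset : meetingParts U e ⊆ U := filter_subset _ _

lemma subset_sup_meetingParts (he : e ⊆ U.sup id) : e ⊆ (meetingParts U e).sup id := by
  intro v hv
  obtain ⟨A, hA, hvA⟩ := mem_sup.mp (he hv)
  exact mem_sup.mpr ⟨A, mem_filter.mpr ⟨hA, v, mem_inter.mpr ⟨hv, hvA⟩⟩, hvA⟩

lemma card_inter_of_mem_meetingParts (hpart : ∀ A ∈ U, #(e ∩ A) ≤ 1) {A : Finset α}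
    (hA : A ∈ meetingParts U e) : #(e ∩ A) = 1 :=
  (hpart A (mem_filter.mp hA).1).antisymm (mem_filter.mp hA).2.card_pos

lemma card_meetingParts (hU : (U : Set (Finset α)).PairwiseDisjoint id) (he : e ⊆ U.sup id)
    (hpart : ∀ A ∈ U, #(e ∩ A) ≤ 1) : #(meetingParts U e) = #e := by
  have hdisj : (meetingParts U e : Set (Finset α)).PairwiseDisjoint (e ∩ ·) :=
    (hU.subset (coe_subset.mpr meetingParts_subset)).mono fun _ => inter_subset_right
  calc #(meetingParts U e) = ∑ A ∈ meetingParts U e, #(e ∩ A) := by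
        rw [sum_congr rfl fun A hA => card_inter_of_mem_meetingParts hpart hA, card_eq_sum_ones]
    _ = #((meetingParts U e).biUnion (e ∩ ·)) := (card_biUnion hdisj).symm
    _ = #e := by
        rw [← inter_biUnion, ← sup_eq_biUnion]
        exact congrArg card (inter_eq_left.mpr (subset_sup_meetingParts he))

lemma card_filter_meetingParts_eq_le_prod {D : Finset (Finset α)}
    (hD : ∀ e ∈ D, e ⊆ U.sup id ∧ ∀ A ∈ U, #(e ∩ A) ≤ 1) (X : Finset (Finset α)) :
    #(D.filter (meetingParts U · = X)) ≤ ∏ A ∈ X, #A := by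
  refine card_le_prod_card_of_card_inter_eq_one (fun e he => ?_) fun e he => ?_
  · obtain ⟨heD, rfl⟩ := mem_filter.mp he
    exact subset_sup_meetingParts (hD e heD).1
  · obtain ⟨heD, rfl⟩ := mem_filter.mp he
    exact fun A hA => card_inter_of_mem_meetingParts (hD e heD).2 hA

lemma card_filter_meetingParts_eq_le_card_partite {D P : Finset (Finset α)}
    (hD : ∀ e ∈ D, e ∈ P ∧ ∀ A ∈ U, #(e ∩ A) ≤ 1) (X : Finset (Finset α)) :
    #(D.filter (meetingParts U · = X)) ≤ #(P.filter fun e => ∀ A ∈ X, #(e ∩ A) = 1) := by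
  refine card_le_card fun e he => ?_
  obtain ⟨heD, rfl⟩ := mem_filter.mp he
  exact mem_filter.mpr ⟨(hD e heD).1, fun A hA => card_inter_of_mem_meetingParts (hD e heD).2 hA⟩

end MeetingParts

lemma card_le_of_fibre_bounds {β γ : Type*} [DecidableEq γ] {D : Finset β} {T : Finset γ}
    {f : β → γ} (hf : ∀ e ∈ D, f e ∈ T) {M t : ℝ} {w : γ → ℝ} (ht : 0 ≤ t)
    (hM : ∀ X ∈ T, (#(D.filter (f · = X)) : ℝ) ≤ M)
    (hw : ∀ X ∈ T, (#(D.filter (f · = X)) : ℝ) ≤ w X) :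
    (#D : ℝ) ≤ M * #(T.filter (t ≤ w ·)) + t * #T := by
  calc (#D : ℝ) = ∑ X ∈ T, (#(D.filter (f · = X)) : ℝ) := by
        exact_mod_cast card_eq_sum_card_fiberwise hf
    _ ≤ ∑ X ∈ T, if t ≤ w X then M else t := by
        refine sum_le_sum fun X hX => ?_
        split_ifs with h
        · exact hM X hX
        · linarith [hw X hX, not_le.mp h]
    _ = M * #(T.filter (t ≤ w ·)) + t * #(T.filter (¬ t ≤ w ·)) := by
        simp only [sum_ite, sum_const, nsmul_eq_mul]; ring
    _ ≤ M * #(T.filter (t ≤ w ·)) + t * #T := by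
        gcongr
        exact filter_subset _ _

theorem stmt11_general {α : Type} [DecidableEq α] (s r m₂ : ℕ) (hs : 2 ≤ s)
    (μ ν : ℝ) (hμ : 0 < μ) (hν : ν = μ / 16)
    (P : Finset (Finset α)) (hPs : ∀ e ∈ P, e.card = s)
    (U : Finset (Finset α)) (hr : U.card = r)
    (hdisj : ∀ A ∈ U, ∀ B ∈ U, A ≠ B → Disjoint A B)
    (hm₂ : ∀ A ∈ U, A.card = m₂)
    (hdeg : ∀ x ∈ U, (1 - 1/(s:ℝ)^2 + 3*μ/4) * (m₂ : ℝ) ^ s * (((r - 1).choose (s - 1) : ℕ) : ℝ) ≤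
      ((P.filter fun e => (e ∩ x).card = 1 ∧ (∀ A ∈ U, (e ∩ A).card ≤ 1) ∧
        e ⊆ U.sup id).card : ℝ)) :
    ∀ x ∈ U, (1 - 1/(s:ℝ) + μ/2) * (((r - 1).choose (s - 1) : ℕ) : ℝ) ≤
      (((U.powersetCard s).filter fun X => x ∈ X ∧
        4 * ν * (m₂ : ℝ) ^ s ≤
          ((P.filter fun e => ∀ A ∈ X, (e ∩ A).card = 1).card : ℝ)).card : ℝ) := by
  subst hν hr
  intro x hx
  obtain hm | hm := Nat.eq_zero_or_pos m₂
  · have hr1 : #U ≤ 1 := card_le_one.mpr fun A hA B hB => by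
      rw [card_eq_zero.mp ((hm₂ A hA).trans hm), card_eq_zero.mp ((hm₂ B hB).trans hm)]
    rw [Nat.choose_eq_zero_of_lt (by omega : #U - 1 < s - 1)]
    simp
  set C : ℝ := (((#U - 1).choose (s - 1) : ℕ) : ℝ)
  set D := P.filter fun e => (e ∩ x).card = 1 ∧ (∀ A ∈ U, (e ∩ A).card ≤ 1) ∧ e ⊆ U.sup id
  set T := (U.powersetCard s).filter (x ∈ ·)
  have hD : ∀ e ∈ D, e ∈ P ∧ #(e ∩ x) = 1 ∧ (∀ A ∈ U, #(e ∩ A) ≤ 1) ∧ e ⊆ U.sup id :=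
    fun e he => mem_filter.mp he
  have hmaps : ∀ e ∈ D, meetingParts U e ∈ T := by
    intro e he
    obtain ⟨heP, hex, hpart, hcover⟩ := hD e he
    refine mem_filter.mpr ⟨mem_powersetCard.mpr ⟨meetingParts_subset, ?_⟩, ?_⟩
    · rw [card_meetingParts (fun A hA B hB => hdisj A hA B hB) hcover hpart, hPs e heP]
    · exact mem_filter.mpr ⟨hx, card_pos.mp (by omega)⟩
  have hdense : ∀ X ∈ T, #(D.filter (meetingParts U · = X)) ≤ m₂ ^ s := by
    intro X hX
    obtain ⟨hXU, hXs⟩ := mem_powersetCard.mp (mem_filter.mp hX).1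
    rw [← hXs, ← prod_eq_pow_card fun A hA => hm₂ A (hXU hA)]
    exact card_filter_meetingParts_eq_le_prod (fun e he => ⟨(hD e he).2.2.2, (hD e he).2.2.1⟩) X
  have hsparse := card_filter_meetingParts_eq_le_card_partite (P := P)
    fun e he => ⟨(hD e he).1, (hD e he).2.2.1⟩
  have hsplit := card_le_of_fibre_bounds hmaps (M := m₂ ^ s) (t := 4 * (μ / 16) * m₂ ^ s)
    (w := fun X => #(P.filter fun e => ∀ A ∈ X, (e ∩ A).card = 1)) (by positivity)
    (fun X hX => mod_cast hdense X hX) (fun X _ => mod_cast hsparse X)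
  have hT : (#T : ℝ) ≤ C := Nat.cast_le.mpr (card_filter_mem_powersetCard_le U hx s)
  have hsq : 1 / (s : ℝ) ^ 2 ≤ 1 / s := by
    gcongr
    exact le_self_pow₀ (by exact_mod_cast (by omega : 1 ≤ s)) two_ne_zero
  rw [← filter_filter]
  nlinarith [hdeg x hx, mul_le_mul_of_nonneg_left hT (by positivity : 0 ≤ μ * m₂ ^ s),
    mul_le_mul_of_nonneg_right hsq (by positivity : (0 : ℝ) ≤ C),
    pow_pos (Nat.cast_pos.mpr hm : (0 : ℝ) < m₂) s]

/-- degree inheritance for the reduced graph `R` on the family `U` of `r`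
disjoint `m₂`-sets, whose edges are `s`-subsets `X ⊆ U` hosting at least `4ν·m₂^s`
`X`-partite edges of `P`; under the stated counting hypotheses,
`δ₁(R) ≥ (1 − 1/s + μ/2)·C(r−1,s−1)`. -/
theorem stmt11 {α : Type} [DecidableEq α] (s r m₂ : ℕ) (hs : 2 ≤ s)
    (μ ν : ℝ) (hμ : 0 < μ) (hν : ν = μ / 16)
    (P : Finset (Finset α)) (hPs : ∀ e ∈ P, e.card = s)
    (U : Finset (Finset α)) (hr : U.card = r)
    (hdisj : ∀ A ∈ U, ∀ B ∈ U, A ≠ B → Disjoint A B)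
    (hm₂ : ∀ A ∈ U, A.card = m₂)
    (hcount : (r : ℝ) ^ (s - 2) * (m₂ : ℝ) ^ s ≤
      μ / 4 * (m₂ : ℝ) ^ s * (((r - 1).choose (s - 1) : ℕ) : ℝ))
    (hdeg : ∀ x ∈ U, (1 - 1/(s:ℝ)^2 + 3*μ/4) * (m₂ : ℝ) ^ s * (((r - 1).choose (s - 1) : ℕ) : ℝ) ≤
      ((P.filter fun e => (e ∩ x).card = 1 ∧ (∀ A ∈ U, (e ∩ A).card ≤ 1) ∧
        e ⊆ U.sup id).card : ℝ)) :
    ∀ x ∈ U, (1 - 1/(s:ℝ) + μ/2) * (((r - 1).choose (s - 1) : ℕ) : ℝ) ≤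
      (((U.powersetCard s).filter fun X => x ∈ X ∧
        4 * ν * (m₂ : ℝ) ^ s ≤
          ((P.filter fun e => ∀ A ∈ X, (e ∩ A).card = 1).card : ℝ)).card : ℝ) :=
  stmt11_general s r m₂ hs μ ν hμ hν P hPs U hr hdisj hm₂ hdeg
end
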